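/- arXiv:1712.04704 — 6 statements merged into one kernel-verified Lean document; each statement's English description precedes it below -/
import Mathlib

section
/- Let Ω ⊂ ℝⁿ be closed and x̄ ∈ Ω. Then the limiting normal cone decomposes as N_Ω(x̄) = N̂_Ω(x̄) ∪ ⋃_{u ∈ T_Ω(x̄), ‖u‖ = 1} N_Ω(x̄; u). -/
open Filter Topology Set Pointwise

noncomputable section

namespace Paper

variable {E : Type*} [NormedAddCommGroup E] [InnerProductSpace ℝ E]
variable {F : Type*} [NormedAddCommGroup F] [InnerProductSpace ℝ F]

/-- The set `V_{ρ,δ}(u)`. -/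
def dirNbhdBase (u : E) (ρ δ : ℝ) : Set E :=
  {z | ‖z‖ ≤ ρ ∧ ‖‖u‖ • z - ‖z‖ • u‖ ≤ δ * ‖z‖ * ‖u‖}

/-- `V` is a directional neighborhood of the direction `u`. -/
def IsDirNbhd (V : Set E) (u : E) : Prop :=
  ∃ ρ > (0:ℝ), ∃ δ > (0:ℝ), dirNbhdBase u ρ δ ⊆ V

/-- Tangent (contingent/Bouligand) cone to `Ω` at `x`. -/
def tangentCone (Ω : Set E) (x : E) : Set E :=
  {u | ∃ (uk : ℕ → E) (tk : ℕ → ℝ), Tendsto uk atTop (𝓝 u) ∧ (∀ k, 0 < tk k) ∧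
    Tendsto tk atTop (𝓝 0) ∧ ∀ k, x + tk k • uk k ∈ Ω}

/-- Fréchet (regular) normal cone to `Ω` at `x` (empty if `x ∉ Ω`). -/
def frechetNC (Ω : Set E) (x : E) : Set E :=
  {ξ | x ∈ Ω ∧ ∀ ε > (0:ℝ), ∀ᶠ y in 𝓝[Ω] x, (inner ℝ ξ (y - x) : ℝ) ≤ ε * ‖y - x‖}

/-- Limiting (Mordukhovich) normal cone to `Ω` at `x`. -/
def limitingNC (Ω : Set E) (x : E) : Set E :=
  {ξ | ∃ (xk ξk : ℕ → E), (∀ k, xk k ∈ Ω) ∧ Tendsto xk atTop (𝓝 x) ∧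
    Tendsto ξk atTop (𝓝 ξ) ∧ ∀ k, ξk k ∈ frechetNC Ω (xk k)}

/-- Directional limiting normal cone to `Ω` at `x` in direction `u`. -/
def dirNC (Ω : Set E) (x : E) (u : E) : Set E :=
  {ξ | ∃ (tk : ℕ → ℝ) (uk ξk : ℕ → E), (∀ k, 0 < tk k) ∧ Tendsto tk atTop (𝓝 0) ∧
    Tendsto uk atTop (𝓝 u) ∧ Tendsto ξk atTop (𝓝 ξ) ∧
    ∀ k, ξk k ∈ frechetNC Ω (x + tk k • uk k)}

/-- The product `E × F` equipped with the (Euclidean) `ℓ²`-structure. -/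
abbrev P2 (E F : Type*) := WithLp 2 (E × F)

/-- Pairing constructor for `P2`. -/
def mk2 {E F : Type*} (x : E) (y : F) : P2 E F := (WithLp.equiv 2 (E × F)).symm (x, y)

/-- Graph of a single-valued mapping. -/
def graphFun (φ : E → F) : Set (P2 E F) := {p | ∃ x, p = mk2 x (φ x)}

/-- Graph of a multifunction. -/
def graphMulti (M : E → Set F) : Set (P2 E F) := {p | ∃ x y, p = mk2 x y ∧ y ∈ M x}

/-- Graphical derivative of a single-valued mapping. -/
def gderiv (φ : E → F) (x : E) (u : E) : Set F :=
  {v | mk2 u v ∈ tangentCone (graphFun φ) (mk2 x (φ x))}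

/-- Graphical derivative of a multifunction at `(x, y)`. -/
def gderivM (M : E → Set F) (x : E) (y : F) (u : E) : Set F :=
  {v | mk2 u v ∈ tangentCone (graphMulti M) (mk2 x y)}

/-- Directional limiting coderivative of a single-valued mapping:
`D*φ(x;(u,v))(η)`. -/
def dirCoderiv (φ : E → F) (x : E) (u : E) (v : F) (η : F) : Set E :=
  {ξ | mk2 ξ (-η) ∈ dirNC (graphFun φ) (mk2 x (φ x)) (mk2 u v)}

/-- Metric subregularity of the multifunction `M` at `(x, y) ∈ Gr M` in direction `u`. -/
def DirMetrSubreg (M : E → Set F) (x : E) (y : F) (u : E) : Prop :=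
  ∃ κ > (0:ℝ), ∃ V : Set E, IsDirNbhd V u ∧
    ∀ x', x' - x ∈ V → Metric.infDist x' {z | y ∈ M z} ≤ κ * Metric.infDist y (M x')

/-- Calmness of a single-valued mapping at `x` in direction `u`. -/
def DirCalm (φ : E → F) (x : E) (u : E) : Prop :=
  ∃ κ > (0:ℝ), ∃ V : Set E, IsDirNbhd V u ∧ ∀ x', x' - x ∈ V → ‖φ x' - φ x‖ ≤ κ * ‖x' - x‖

/-- Lipschitz continuity of a single-valued mapping near `x` in direction `u`. -/
def DirLipschitz (φ : E → F) (x : E) (u : E) : Prop :=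
  ∃ κ > (0:ℝ), ∃ V : Set E, IsDirNbhd V u ∧
    ∀ x₁ x₂, x₁ - x ∈ V → x₂ - x ∈ V → ‖φ x₁ - φ x₂‖ ≤ κ * ‖x₁ - x₂‖

/-- Inner semicompactness of `S` at `y` w.r.t. `Ω` in direction `v`. -/
def DirInnerSemicompact (S : F → Set E) (y : F) (Ω : Set F) (v : F) : Prop :=
  ∀ (t : ℕ → ℝ) (vk : ℕ → F), (∀ k, 0 < t k) → Tendsto t atTop (𝓝 0) →
    Tendsto vk atTop (𝓝 v) → (∀ k, y + t k • vk k ∈ Ω) →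
    ∃ (K : ℕ → ℕ) (xk : ℕ → E) (x : E), StrictMono K ∧
      (∀ k, xk k ∈ S (y + t (K k) • vk (K k))) ∧ Tendsto xk atTop (𝓝 x)

/-- Inner calmness of `S` at `(y, x) ∈ Gr S` w.r.t. `Ω` in direction `v`. -/
def DirInnerCalm (S : F → Set E) (y : F) (x : E) (Ω : Set F) (v : F) : Prop :=
  ∃ κ > (0:ℝ), ∃ V : Set F, IsDirNbhd V v ∧
    ∀ y', y' - y ∈ V → y' ∈ Ω → ∃ x' ∈ S y', ‖x - x'‖ ≤ κ * ‖y' - y‖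

/-- Epigraph of an extended-real-valued function, as a subset of `E ×₂ ℝ`. -/
def epiE (f : E → EReal) : Set (P2 E ℝ) := {p | ∃ (x : E) (α : ℝ), p = mk2 x α ∧ f x ≤ (α : EReal)}

/-- Graph of an extended-real-valued function, as a subset of `E ×₂ ℝ`. -/
def graphE (f : E → EReal) : Set (P2 E ℝ) := {p | ∃ (x : E) (α : ℝ), p = mk2 x α ∧ f x = (α : EReal)}

/-- Graphical derivative `Df(x)(h)` of an extended-real-valued function. -/
def gderivE (f : E → EReal) (x : E) (h : E) : Set ℝ :=
  {ν | mk2 h ν ∈ tangentCone (graphE f) (mk2 x (f x).toReal)}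

/-- Directional limiting subdifferential `∂f(x;(h,ν))`. -/
def dirSubdiff (f : E → EReal) (x : E) (h : E) (ν : ℝ) : Set E :=
  {ξ | mk2 ξ (-1 : ℝ) ∈ dirNC (epiE f) (mk2 x (f x).toReal) (mk2 h ν)}

/-- Directional singular limiting subdifferential `∂^∞ f(x;(h,ν))`. -/
def dirSingSubdiff (f : E → EReal) (x : E) (h : E) (ν : ℝ) : Set E :=
  {ξ | mk2 ξ (0 : ℝ) ∈ dirNC (epiE f) (mk2 x (f x).toReal) (mk2 h ν)}

/-- Fréchet (regular) subdifferential `∂̂f(x)`. -/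
def regSubdiff (f : E → EReal) (x : E) : Set E :=
  {ξ | ∀ ε > (0:ℝ), ∀ᶠ y in 𝓝 x,
    f x + ((((inner ℝ ξ (y - x) : ℝ)) - ε * ‖y - x‖ : ℝ) : EReal) ≤ f y}

/-- Analytic directional limiting subdifferential `∂ₐf(x;h)`. -/
def aDirSubdiff (f : E → EReal) (x : E) (h : E) : Set E :=
  {ξ | ∃ (t : ℕ → ℝ) (hk ξk : ℕ → E), (∀ k, 0 < t k) ∧ Tendsto t atTop (𝓝 0) ∧
    Tendsto hk atTop (𝓝 h) ∧ Tendsto ξk atTop (𝓝 ξ) ∧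
    Tendsto (fun k => f (x + t k • hk k)) atTop (𝓝 (f x)) ∧
    ∀ k, ξk k ∈ regSubdiff f (x + t k • hk k)}

/-- Domain of an extended-real-valued function. -/
def domE (f : E → EReal) : Set E := {x | f x ≠ ⊤ ∧ f x ≠ ⊥}

/-- Calmness of an extended-real-valued function at `x` in direction `h`
(understood w.r.t. its domain). -/
def DirCalmE (f : E → EReal) (x : E) (h : E) : Prop :=
  ∃ κ > (0:ℝ), ∃ V : Set E, IsDirNbhd V h ∧
    ∀ x', x' - x ∈ V → x' ∈ domE f → |(f x').toReal - (f x).toReal| ≤ κ * ‖x' - x‖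

/-- The set `N_{epi f}((x, f(x)); (h, ±∞))`; use `L = atTop` for `+∞` and `L = atBot` for `-∞`. -/
def NepiInfty (f : E → EReal) (x : E) (h : E) (L : Filter ℝ) : Set (P2 E ℝ) :=
  {q | ∃ (t νs : ℕ → ℝ) (hk : ℕ → E) (qk : ℕ → P2 E ℝ),
    (∀ k, 0 < t k) ∧ Tendsto t atTop (𝓝 0) ∧ Tendsto hk atTop (𝓝 h) ∧
    Tendsto νs atTop L ∧ Tendsto (fun k => t k * νs k) atTop (𝓝 0) ∧
    Tendsto qk atTop (𝓝 q) ∧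
    ∀ k, qk k ∈ frechetNC (epiE f) (mk2 x (f x).toReal + t k • mk2 (hk k) (νs k))}

/-- Directional differentiability: `f′(x;h) = d` as a limit over `t ↓ 0`, `h′ → h`. -/
def HasDirDeriv (f : E → EReal) (x : E) (h : E) (d : ℝ) : Prop :=
  Tendsto (fun p : ℝ × E => ((p.1⁻¹ : ℝ) : EReal) * (f (x + p.1 • p.2) - f x))
    ((𝓝[>] (0:ℝ)) ×ˢ 𝓝 h) (𝓝 (d : EReal))

abbrev Euc (n : ℕ) := EuclideanSpace ℝ (Fin n)

/-!
A limiting normal `ξ` is a limit of Fréchet normals `ξ k` at points `y k → x`. If `y k = x`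
infinitely often, `ξ` lies in `N̂_Ω(x)`, which is closed. Otherwise the directions
`(y k - x) / ‖y k - x‖` lie on the compact unit sphere, so along a subsequence they converge to a
unit tangent direction `u`, and the same subsequence exhibits `ξ ∈ N_Ω(x; u)`.
-/

open scoped RealInnerProductSpace

theorem isClosed_frechetNC (Ω : Set E) (x : E) : IsClosed (frechetNC Ω x) := by
  refine isClosed_of_closure_subset fun ξ hξ => ?_
  obtain ⟨η₀, hη₀, -⟩ := Metric.mem_closure_iff.1 hξ 1 one_pos
  refine ⟨hη₀.1, fun ε hε => ?_⟩
  obtain ⟨η, ⟨-, hη⟩, hξη⟩ := Metric.mem_closure_iff.1 hξ (ε / 2) (half_pos hε)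
  filter_upwards [hη (ε / 2) (half_pos hε)] with y hy
  calc ⟪ξ, y - x⟫
    _ = ⟪η, y - x⟫ + ⟪ξ - η, y - x⟫ := by rw [← inner_add_left, add_sub_cancel]
    _ ≤ ε / 2 * ‖y - x‖ + ‖ξ - η‖ * ‖y - x‖ := add_le_add hy (real_inner_le_norm _ _)
    _ ≤ ε / 2 * ‖y - x‖ + ε / 2 * ‖y - x‖ := by
        gcongr
        rw [← dist_eq_norm]
        exact hξη.le
    _ = ε * ‖y - x‖ := by ring

theorem frechetNC_subset_limitingNC (Ω : Set E) (x : E) : frechetNC Ω x ⊆ limitingNC Ω x :=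
  fun ξ hξ => ⟨fun _ => x, fun _ => ξ, fun _ => hξ.1, tendsto_const_nhds, tendsto_const_nhds,
    fun _ => hξ⟩

theorem dirNC_subset_limitingNC (Ω : Set E) (x u : E) : dirNC Ω x u ⊆ limitingNC Ω x := by
  rintro ξ ⟨t, v, η, -, ht, hv, hη, hfr⟩
  refine ⟨fun k => x + t k • v k, η, fun k => (hfr k).1, ?_, hη, hfr⟩
  simpa using tendsto_const_nhds.add (ht.smul hv)

theorem exists_unit_tangent_mem_dirNC [ProperSpace E] {Ω : Set E} {x ξ : E} {y η : ℕ → E}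
    (hy : Tendsto y atTop (𝓝 x)) (hyx : ∀ k, y k ≠ x) (hη : Tendsto η atTop (𝓝 ξ))
    (hfr : ∀ k, η k ∈ frechetNC Ω (y k)) :
    ∃ u ∈ tangentCone Ω x ∩ {u | ‖u‖ = 1}, ξ ∈ dirNC Ω x u := by
  set t : ℕ → ℝ := fun k => ‖y k - x‖
  set v : ℕ → E := fun k => (t k)⁻¹ • (y k - x)
  have ht_pos : ∀ k, 0 < t k := fun k => norm_pos_iff.2 (sub_ne_zero.2 (hyx k))
  have ht : Tendsto t atTop (𝓝 0) := by simpa using (hy.sub_const x).norm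
  have hv : ∀ k, v k ∈ Metric.sphere (0 : E) 1 := fun k => by
    rw [mem_sphere_zero_iff_norm, norm_smul, norm_inv, norm_norm]
    exact inv_mul_cancel₀ (ht_pos k).ne'
  have hxtv : ∀ k, x + t k • v k = y k := fun k => by
    simp [v, smul_smul, (ht_pos k).ne']
  obtain ⟨u, hu, φ, hφ, hvu⟩ := (isCompact_sphere (0 : E) 1).tendsto_subseq hv
  have htφ := ht.comp hφ.tendsto_atTop
  refine ⟨u, ⟨⟨v ∘ φ, t ∘ φ, hvu, fun k => ht_pos _, htφ, fun k => ?_⟩,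
    mem_sphere_zero_iff_norm.1 hu⟩, t ∘ φ, v ∘ φ, η ∘ φ, fun k => ht_pos _, htφ, hvu,
    hη.comp hφ.tendsto_atTop, fun k => ?_⟩
  · simpa [hxtv] using (hfr (φ k)).1
  · simpa [hxtv] using hfr (φ k)

theorem limitingNC_subset_frechetNC_union_dirNC [ProperSpace E] (Ω : Set E) (x : E) :
    limitingNC Ω x ⊆
      frechetNC Ω x ∪ ⋃ u ∈ tangentCone Ω x ∩ {u : E | ‖u‖ = 1}, dirNC Ω x u := by
  rintro ξ ⟨y, η, -, hy, hη, hfr⟩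
  by_cases hfreq : ∃ᶠ k in atTop, y k = x
  · exact .inl <| (isClosed_frechetNC Ω x).mem_of_frequently_of_tendsto
      (hfreq.mono fun k hk => hk ▸ hfr k) hη
  · obtain ⟨N, hN⟩ := eventually_atTop.1 (not_frequently.1 hfreq)
    have hshift := tendsto_add_atTop_nat N
    obtain ⟨u, hu, hξ⟩ := exists_unit_tangent_mem_dirNC (hy.comp hshift)
      (fun k => hN _ (Nat.le_add_left N k)) (hη.comp hshift) (fun k => hfr (k + N))
    exact .inr (mem_biUnion hu hξ)

theorem limitingNC_eq_frechetNC_union_dirNC_general {n : ℕ} (Ω : Set (Euc n)) (x : Euc n) :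
    limitingNC Ω x =
      frechetNC Ω x ∪ ⋃ u ∈ tangentCone Ω x ∩ {u : Euc n | ‖u‖ = 1}, dirNC Ω x u :=
  (limitingNC_subset_frechetNC_union_dirNC Ω x).antisymm <| union_subset
    (frechetNC_subset_limitingNC Ω x) (iUnion₂_subset fun u _ => dirNC_subset_limitingNC Ω x u)

/-- **Lemma 2.1.** For closed `Ω` and `x̄ ∈ Ω`, the limiting normal cone is the union of the
Fréchet normal cone and the directional limiting normal cones in unit tangent directions. -/
theorem limitingNC_eq_frechetNC_union_dirNC {n : ℕ} (Ω : Set (Euc n)) (hΩ : IsClosed Ω)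
    (x : Euc n) (hx : x ∈ Ω) :
    limitingNC Ω x =
      frechetNC Ω x ∪ ⋃ u ∈ tangentCone Ω x ∩ {u : Euc n | ‖u‖ = 1}, dirNC Ω x u :=
  limitingNC_eq_frechetNC_union_dirNC_general Ω x

end Paper
end
end

section
/- Let ℝⁿ = ℝ^{n₁} × … × ℝ^{n_l}, let C_i ⊂ ℝ^{n_i} be closed for i = 1,…,l, set C = C₁ × … × C_l, and let x̄ = (x̄₁,…,x̄_l) ∈ C and h = (h₁,…,h_l) ∈ ℝⁿ. Then N_C(x̄; h) ⊂ N_{C₁}(x̄₁; h₁) × … × N_{C_l}(x̄_l; h_l). -/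
open Filter Topology Set Pointwise

noncomputable section

namespace Paper

variable {E : Type*} [NormedAddCommGroup E] [InnerProductSpace ℝ E]
variable {F : Type*} [NormedAddCommGroup F] [InnerProductSpace ℝ F]

/-! A Fréchet normal to the product at `y` is in particular a Fréchet normal along the
isometric slice `w ↦ y + single i (w - y i)`, which lies in the product exactly when `w ∈ C i`;
pairing with that slice reads off the `i`-th coordinate. Directional limiting normals are limits
of Fréchet normals, and coordinate projection commutes with all the limits involved. -/

open scoped NNReal

theorem mem_frechetNC_of_lipschitzWith {Ω : Set E} {D : Set F} {g : F → E} {K : ℝ≥0}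
    {y : F} {ξ : E} {η : F} (hg : LipschitzWith K g) (hgD : MapsTo g D Ω) (hy : y ∈ D)
    (hinner : ∀ w, inner ℝ ξ (g w - g y) = inner ℝ η (w - y))
    (hξ : ξ ∈ frechetNC Ω (g y)) : η ∈ frechetNC D y := by
  refine ⟨hy, fun ε hε => ?_⟩
  have hg_tendsto : Tendsto g (𝓝[D] y) (𝓝[Ω] (g y)) :=
    tendsto_nhdsWithin_iff.2 ⟨hg.continuous.continuousWithinAt,
      eventually_nhdsWithin_of_forall fun w hw => hgD hw⟩
  filter_upwards [hg_tendsto.eventually (hξ.2 (ε / (K + 1)) (by positivity))] with w hw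
  calc inner ℝ η (w - y) = inner ℝ ξ (g w - g y) := (hinner w).symm
    _ ≤ ε / (K + 1) * ‖g w - g y‖ := hw
    _ ≤ ε / (K + 1) * ((K + 1) * ‖w - y‖) := by
        gcongr
        rw [← dist_eq_norm, ← dist_eq_norm]
        exact (hg.dist_le_mul w y).trans (by gcongr; linarith)
    _ = ε * ‖w - y‖ := by field_simp

theorem apply_mem_frechetNC_of_mem_frechetNC_pi {ι : Type*} [Fintype ι]
    {β : ι → Type*} [∀ i, NormedAddCommGroup (β i)] [∀ i, InnerProductSpace ℝ (β i)]
    {C : ∀ i, Set (β i)} {y ξ : PiLp 2 β}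
    (hξ : ξ ∈ frechetNC {z : PiLp 2 β | ∀ i, z i ∈ C i} y) (i : ι) :
    ξ i ∈ frechetNC (C i) (y i) := by
  classical
  let g : β i → PiLp 2 β := fun w => y + PiLp.single 2 i (w - y i)
  have hg_sub : ∀ w, g w - g (y i) = PiLp.single 2 i (w - y i) := by
    intro w; simp [g]
  have hg_y : g (y i) = y := by simp [g]
  have hg_isometry : Isometry g := Isometry.of_dist_eq fun w w' => by
    simp [g, dist_eq_norm, ← PiLp.single_sub, PiLp.norm_single]
  refine mem_frechetNC_of_lipschitzWith hg_isometry.lipschitz ?_ (hξ.1 i) ?_ (hg_y ▸ hξ)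
  · intro w hw j
    rcases eq_or_ne j i with rfl | hj
    · simpa [g] using hw
    · simpa [g, Pi.single_eq_of_ne hj] using hξ.1 j
  · intro w
    rw [hg_sub, PiLp.inner_apply, Fintype.sum_eq_single i fun j hj => by
      simp [Pi.single_eq_of_ne hj]]
    simp

theorem dirNC_pi_subset_general {l : ℕ} (n : Fin l → ℕ) (C : ∀ i, Set (Euc (n i)))
    (x h : PiLp 2 (fun i => Euc (n i))) :
    dirNC {z : PiLp 2 (fun i => Euc (n i)) | ∀ i, z i ∈ C i} x h ⊆
      {ξ : PiLp 2 (fun i => Euc (n i)) | ∀ i, ξ i ∈ dirNC (C i) (x i) (h i)} := by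
  rintro ξ ⟨t, u, ζ, ht_pos, ht, hu, hζ, hζ_mem⟩ i
  have heval := (PiLp.continuous_apply 2 (fun i => Euc (n i)) i).tendsto
  exact ⟨t, fun k => u k i, fun k => ζ k i, ht_pos, ht, (heval _).comp hu, (heval _).comp hζ,
    fun k => apply_mem_frechetNC_of_mem_frechetNC_pi (hζ_mem k) i⟩

/-- **Proposition 2.2.** Directional limiting normal cone of a product is contained in the
product of the directional limiting normal cones. -/
theorem dirNC_pi_subset {l : ℕ} (n : Fin l → ℕ) (C : ∀ i, Set (Euc (n i)))
    (hC : ∀ i, IsClosed (C i)) (x h : PiLp 2 (fun i => Euc (n i))) (hx : ∀ i, x i ∈ C i) :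
    dirNC {z : PiLp 2 (fun i => Euc (n i)) | ∀ i, z i ∈ C i} x h ⊆
      {ξ : PiLp 2 (fun i => Euc (n i)) | ∀ i, ξ i ∈ dirNC (C i) (x i) (h i)} :=
  dirNC_pi_subset_general n C x h

end Paper
end
end

section
/- Let Q ⊂ ℝᵐ be closed, φ : ℝⁿ → ℝᵐ continuous, C := φ⁻¹(Q), x̄ ∈ C, and assume the multifunction F(x) = Q − φ(x) is metrically subregular at (x̄, 0) in direction h ∈ ℝⁿ and, in addition, that φ is calm at x̄ in direction h. Then N_C(x̄; h) ⊂ ⋃_{v ∈ Dφ(x̄)(h) ∩ T_Q(φ(x̄))} D*φ(x̄; (h, v)) N_Q(φ(x̄); v). -/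
/-!
Let `ξ` be the limit of Fréchet normals `ξₖ` to `C = φ⁻¹(Q)` at `xₖ = x + tₖ hₖ`. Near `xₖ`,
subregularity bounds `dist(·, C)` by `κ dist(φ ·, Q)`, so `ξₖ` is, up to `o(‖· - xₖ‖)`, a subgradient of
the penalty `L dist(φ ·, Q)`. Minimizing a smoothed version of
`-⟪ξₖ, y - xₖ⟫ + 2ε‖y - xₖ‖ + L‖z - φ y‖` over `y` near `xₖ` and `z ∈ Q` (with `ε = tₖ²`) produces a
Fréchet normal `ηₖ` to `Q` at `zₖ ≈ φ yₖ` and a Fréchet normal `(ξₖ', -ηₖ)` to the graph of `φ`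
at `yₖ ≈ xₖ`, with `ξₖ' ≈ ξₖ` and `‖ηₖ‖ ≤ L`. Calmness bounds the quotients `(φ yₖ - φ x) / tₖ`,
so along a subsequence they converge to some `v` and `ηₖ → η`; the limits give
`v ∈ Dφ(x)(h) ∩ T_Q(φ x)`, `η ∈ N_Q(φ x; v)` and `ξ ∈ D*φ(x; (h, v))(η)`.
-/

open Filter Topology Set Pointwise

noncomputable section

namespace Paper

variable {E : Type*} [NormedAddCommGroup E] [InnerProductSpace ℝ E]
variable {F : Type*} [NormedAddCommGroup F] [InnerProductSpace ℝ F]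

open Metric

theorem infDist_zero_setOf_add_mem {Y : Type*} [SeminormedAddCommGroup Y] (v : Y) (Q : Set Y) :
    infDist 0 {y | v + y ∈ Q} = infDist v Q := by
  have hΦ : Isometry fun q : Y => -v + q := isometry_add_left (-v)
  have himg : (fun q : Y => -v + q) '' Q = {y | v + y ∈ Q} := by
    rw [image_add_left, neg_neg]; rfl
  rw [← himg, ← infDist_image hΦ (x := v), neg_add_cancel]

theorem norm_norm_smul_sub_norm_smul_le (u w : E) :
    ‖‖u‖ • w - ‖w‖ • u‖ ≤ 2 * ‖u‖ * ‖w - u‖ := by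
  have hsplit : ‖u‖ • w - ‖w‖ • u = ‖u‖ • (w - u) + (‖u‖ - ‖w‖) • u := by
    rw [smul_sub, sub_smul]; abel
  have hrev : |‖u‖ - ‖w‖| ≤ ‖w - u‖ := by
    rw [abs_sub_comm]; exact abs_norm_sub_norm_le w u
  calc ‖‖u‖ • w - ‖w‖ • u‖ ≤ ‖u‖ * ‖w - u‖ + |‖u‖ - ‖w‖| * ‖u‖ := by
        rw [hsplit]
        refine (norm_add_le _ _).trans_eq ?_
        rw [norm_smul, norm_smul, norm_norm, Real.norm_eq_abs]
    _ ≤ 2 * ‖u‖ * ‖w - u‖ := by nlinarith [norm_nonneg u]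

theorem norm_inv_smul_le_of_le_sq {X : Type*} [SeminormedAddCommGroup X] [NormedSpace ℝ X]
    {t : ℝ} (ht : 0 < t) {v : X} (hv : ‖v‖ ≤ t ^ 2) : ‖t⁻¹ • v‖ ≤ t := by
  rw [norm_smul, norm_inv, Real.norm_eq_abs, abs_of_pos ht, inv_mul_le_iff₀ ht]
  linarith

theorem _root_.Filter.Tendsto.of_eventually_dist_le {α ι : Type*} [PseudoMetricSpace α]
    {l : Filter ι} {f g : ι → α} {a : α} {e : ι → ℝ} (hf : Tendsto f l (𝓝 a))
    (he : Tendsto e l (𝓝 0)) (hfg : ∀ᶠ k in l, dist (f k) (g k) ≤ e k) : Tendsto g l (𝓝 a) :=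
  hf.congr_dist (squeeze_zero' (.of_forall fun _ => dist_nonneg) hfg he)

theorem tendsto_mk2 {α : Type*} {l : Filter α} {f : α → E} {g : α → F} {a : E} {b : F}
    (hf : Tendsto f l (𝓝 a)) (hg : Tendsto g l (𝓝 b)) :
    Tendsto (fun i => mk2 (f i) (g i)) l (𝓝 (mk2 a b)) :=
  ((WithLp.prodContinuousLinearEquiv 2 ℝ E F).symm.continuous.tendsto (a, b)).comp
    (hf.prodMk_nhds hg)

theorem inv_smul_mk2_sub (t : ℝ) (a a' : E) (b b' : F) :
    t⁻¹ • (mk2 a b - mk2 a' b') = mk2 (t⁻¹ • (a - a')) (t⁻¹ • (b - b')) := rfl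

section SmoothNorm

variable {X : Type*} [NormedAddCommGroup X] {σ : ℝ}

def smoothNorm (σ : ℝ) (u : X) : ℝ := √(‖u‖ ^ 2 + σ ^ 2)

theorem norm_le_smoothNorm (σ : ℝ) (u : X) : ‖u‖ ≤ smoothNorm σ u :=
  Real.le_sqrt_of_sq_le (le_add_of_nonneg_right (sq_nonneg σ))

theorem smoothNorm_zero (hσ : 0 ≤ σ) : smoothNorm σ (0 : X) = σ := by
  simp [smoothNorm, Real.sqrt_sq hσ]

theorem smoothNorm_pos (hσ : σ ≠ 0) (u : X) : 0 < smoothNorm σ u :=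
  Real.sqrt_pos.2 (by positivity)

theorem smoothNorm_sub_comm (σ : ℝ) (u w : X) : smoothNorm σ (u - w) = smoothNorm σ (w - u) := by
  rw [smoothNorm, smoothNorm, norm_sub_rev]

theorem continuous_smoothNorm (σ : ℝ) : Continuous (smoothNorm σ : X → ℝ) := by
  unfold smoothNorm; fun_prop

theorem norm_smul_smoothNorm_inv_le [NormedSpace ℝ X] (hσ : σ ≠ 0) (u : X) {c : ℝ} (hc : 0 ≤ c) :
    ‖(c * (smoothNorm σ u)⁻¹) • u‖ ≤ c := by
  have hθ := smoothNorm_pos hσ u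
  rw [norm_smul, Real.norm_eq_abs, abs_of_nonneg (by positivity), mul_assoc]
  exact mul_le_of_le_one_right hc ((inv_mul_le_one₀ hθ).2 (norm_le_smoothNorm σ u))

theorem hasFDerivAt_smoothNorm_sub [InnerProductSpace ℝ X] (hσ : σ ≠ 0) (a u : X) :
    HasFDerivAt (fun y => smoothNorm σ (y - a))
      (innerSL ℝ ((smoothNorm σ (u - a))⁻¹ • (u - a))) u := by
  have hsq : HasFDerivAt (fun y : X => ‖y - a‖ ^ 2 + σ ^ 2) (2 • innerSL ℝ (u - a)) u := by
    simpa using (((hasFDerivAt_id u).sub_const a).norm_sq).add_const (σ ^ 2)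
  refine (hsq.sqrt (by positivity)).congr_fderiv ?_
  ext v
  simp [smoothNorm]
  ring

end SmoothNorm

theorem mem_tangentCone_of_mem_dirNC {Ω : Set E} {x u ξ : E} (hξ : ξ ∈ dirNC Ω x u) :
    u ∈ tangentCone Ω x := by
  obtain ⟨t, uk, ξk, htpos, ht, hu, -, hmem⟩ := hξ
  exact ⟨uk, t, hu, htpos, ht, fun k => (hmem k).1⟩

theorem mem_gderiv_of_mem_dirCoderiv {φ : E → F} {x h : E} {v η : F} {ξ : E}
    (hξ : ξ ∈ dirCoderiv φ x h v η) : v ∈ gderiv φ x h :=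
  mem_tangentCone_of_mem_dirNC hξ

theorem exists_tendsto_of_mem_dirNC {Ω : Set E} {x u ξ : E} (hξ : ξ ∈ dirNC Ω x u) :
    ∃ (t : ℕ → ℝ) (uk ξk : ℕ → E), Tendsto t atTop (𝓝[>] 0) ∧ Tendsto uk atTop (𝓝 u) ∧
      Tendsto ξk atTop (𝓝 ξ) ∧ ∀ k, ξk k ∈ frechetNC Ω (x + t k • uk k) := by
  obtain ⟨t, uk, ξk, htpos, ht, hu, hξk, hmem⟩ := hξ
  exact ⟨t, uk, ξk, tendsto_nhdsWithin_iff.2 ⟨ht, .of_forall htpos⟩, hu, hξk, hmem⟩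

theorem mem_dirNC_of_tendsto {Ω : Set E} {x u ξ : E} {t : ℕ → ℝ} {p ξk : ℕ → E}
    (ht : Tendsto t atTop (𝓝[>] 0)) (hp : Tendsto (fun k => (t k)⁻¹ • (p k - x)) atTop (𝓝 u))
    (hξk : Tendsto ξk atTop (𝓝 ξ)) (hmem : ∀ᶠ k in atTop, ξk k ∈ frechetNC Ω (p k)) :
    ξ ∈ dirNC Ω x u := by
  obtain ⟨ht0, htpos⟩ := tendsto_nhdsWithin_iff.1 ht
  obtain ⟨N, hN⟩ := eventually_atTop.1 (htpos.and hmem)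
  have hshift := tendsto_add_atTop_nat N
  refine ⟨fun k => t (k + N), fun k => (t (k + N))⁻¹ • (p (k + N) - x), fun k => ξk (k + N),
    fun k => (hN _ le_add_self).1, ht0.comp hshift, hp.comp hshift, hξk.comp hshift,
    fun k => ?_⟩
  rw [smul_inv_smul₀ (hN _ le_add_self).1.ne', add_sub_cancel]
  exact (hN _ le_add_self).2

theorem neg_mem_frechetNC_of_isLocalMinOn {Ω : Set E} {p g : E} {ψ : E → ℝ} (hp : p ∈ Ω)
    (hψ : HasFDerivAt ψ (innerSL ℝ g) p) (hmin : IsLocalMinOn ψ Ω p) :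
    -g ∈ frechetNC Ω p := by
  refine ⟨hp, fun ε hε => ?_⟩
  filter_upwards [hmin, nhdsWithin_le_nhds (hψ.isLittleO.def hε)] with q hq hq'
  rw [Real.norm_eq_abs, innerSL_apply_apply] at hq'
  rw [inner_neg_left]
  linarith [(abs_le.1 hq').2]

theorem mk2_neg_mem_frechetNC_graphFun_of_isLocalMin {φ : E → F} {f : E → ℝ} {g : F → ℝ}
    {x : E} {a : E} {b : F} (hf : HasFDerivAt f (innerSL ℝ a) x)
    (hg : HasFDerivAt g (innerSL ℝ b) (φ x)) (hmin : IsLocalMin (fun y => f y + g (φ y)) x) :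
    mk2 (-a) (-b) ∈ frechetNC (graphFun φ) (mk2 x (φ x)) := by
  let e := WithLp.prodContinuousLinearEquiv 2 ℝ E F
  let π₁ := (ContinuousLinearMap.fst ℝ E F).comp (e : P2 E F →L[ℝ] E × F)
  let π₂ := (ContinuousLinearMap.snd ℝ E F).comp (e : P2 E F →L[ℝ] E × F)
  have hψ : HasFDerivAt (fun p : P2 E F => f (π₁ p) + g (π₂ p)) (innerSL ℝ (mk2 a b))
      (mk2 x (φ x)) := by
    refine ((hf.comp (mk2 x (φ x)) π₁.hasFDerivAt).add
      (hg.comp (mk2 x (φ x)) π₂.hasFDerivAt)).congr_fderiv ?_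
    ext q
    simp [π₁, π₂, e, mk2, WithLp.prod_inner_apply]
  have hmin' : IsLocalMinOn (fun p : P2 E F => f (π₁ p) + g (π₂ p)) (graphFun φ)
      (mk2 x (φ x)) := by
    have hπ₁ : Tendsto π₁ (𝓝 (mk2 x (φ x))) (𝓝 x) := π₁.continuous.tendsto _
    filter_upwards [nhdsWithin_le_nhds (hπ₁.eventually hmin), self_mem_nhdsWithin]
      with p hp hpg
    obtain ⟨y, rfl⟩ := hpg
    exact hp
  have hmem : mk2 x (φ x) ∈ graphFun φ := ⟨x, rfl⟩
  exact neg_mem_frechetNC_of_isLocalMinOn hmem hψ hmin'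

theorem eventually_inner_le_of_mem_frechetNC [ProperSpace E] {C : Set E} (hC : IsClosed C)
    {x₀ ξ : E} (hξ : ξ ∈ frechetNC C x₀) {ε : ℝ} (hε : 0 < ε) :
    ∀ᶠ y in 𝓝 x₀, inner ℝ ξ (y - x₀) ≤ ε * ‖y - x₀‖ + (‖ξ‖ + ε) * infDist y C := by
  obtain ⟨hx₀, hfr⟩ := hξ
  obtain ⟨r, hr, hball⟩ := Metric.mem_nhdsWithin_iff.1 (hfr ε hε)
  filter_upwards [ball_mem_nhds x₀ (half_pos hr)] with y hy
  rw [mem_ball, dist_eq_norm] at hy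
  obtain ⟨c, hcC, hc⟩ := hC.exists_infDist_eq_dist ⟨x₀, hx₀⟩ y
  rw [dist_eq_norm] at hc
  have hyc : ‖y - c‖ ≤ ‖y - x₀‖ := hc ▸ (infDist_le_dist_of_mem hx₀).trans_eq (dist_eq_norm _ _)
  have hcx : ‖c - x₀‖ ≤ ‖y - c‖ + ‖y - x₀‖ := by
    simpa [norm_sub_rev y c] using norm_sub_le_norm_sub_add_norm_sub c y x₀
  have hfc : inner ℝ ξ (c - x₀) ≤ ε * ‖c - x₀‖ :=
    hball ⟨by rw [mem_ball, dist_eq_norm]; linarith, hcC⟩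
  calc inner ℝ ξ (y - x₀) = inner ℝ ξ (y - c) + inner ℝ ξ (c - x₀) := by
        rw [← inner_add_right, sub_add_sub_cancel]
    _ ≤ ‖ξ‖ * ‖y - c‖ + ε * (‖y - c‖ + ‖y - x₀‖) := by
        gcongr
        · exact real_inner_le_norm _ _
        · exact hfc.trans (by gcongr)
    _ = ε * ‖y - x₀‖ + (‖ξ‖ + ε) * infDist y C := by rw [hc]; ring

theorem IsDirNbhd.exists_eventually_smul_mem {V : Set E} {u : E} (hV : IsDirNbhd V u) :
    ∃ c > 0, ∀ᶠ t in 𝓝[>] (0 : ℝ), ∀ w ∈ closedBall u c, t • w ∈ V := by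
  obtain ⟨ρ, hρ, δ, hδ, hbase⟩ := hV
  obtain ⟨c, hc, hangle⟩ : ∃ c > 0, ∀ w ∈ closedBall u c, 2 * ‖u‖ * ‖w - u‖ ≤ δ * ‖w‖ * ‖u‖ := by
    rcases eq_or_ne u 0 with rfl | hu
    · exact ⟨1, one_pos, fun w _ => by simp⟩
    have hu' : 0 < ‖u‖ := norm_pos_iff.2 hu
    refine ⟨δ * ‖u‖ / (2 + δ), by positivity, fun w hw => ?_⟩
    rw [mem_closedBall, dist_eq_norm] at hw
    have hw' : ‖u‖ - ‖w - u‖ ≤ ‖w‖ := by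
      linarith [norm_sub_norm_le u w, norm_sub_rev u w]
    have : (2 + δ) * ‖w - u‖ ≤ δ * ‖u‖ := by rwa [le_div_iff₀' (by positivity)] at hw
    have h2 : 2 * ‖w - u‖ ≤ δ * ‖w‖ := by nlinarith
    nlinarith [mul_le_mul_of_nonneg_right h2 hu'.le]
  refine ⟨c, hc, ?_⟩
  filter_upwards [Ioo_mem_nhdsGT (show (0 : ℝ) < ρ / (‖u‖ + c) by positivity)] with t ht w hw
  refine hbase ⟨?_, ?_⟩
  · have hw' : ‖w‖ ≤ ‖u‖ + c := by
      have := norm_le_norm_add_norm_sub' w u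
      rw [mem_closedBall, dist_eq_norm] at hw
      linarith
    rw [norm_smul, Real.norm_eq_abs, abs_of_pos ht.1]
    calc t * ‖w‖ ≤ ρ / (‖u‖ + c) * (‖u‖ + c) := by gcongr; exact ht.2.le
      _ = ρ := div_mul_cancel₀ _ (by positivity)
  · have hts : ‖u‖ • (t • w) - ‖t • w‖ • u = t • (‖u‖ • w - ‖w‖ • u) := by
      rw [norm_smul, Real.norm_eq_abs, abs_of_pos ht.1, smul_sub, smul_comm, mul_smul]
    rw [hts, norm_smul, norm_smul, Real.norm_eq_abs, abs_of_pos ht.1]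
    calc t * ‖‖u‖ • w - ‖w‖ • u‖ ≤ t * (δ * ‖w‖ * ‖u‖) :=
          mul_le_mul_of_nonneg_left ((norm_norm_smul_sub_norm_smul_le u w).trans (hangle w hw))
            ht.1.le
      _ = δ * (t * ‖w‖) * ‖u‖ := by ring

section Directional

variable {Y : Type*} [NormedAddCommGroup Y]

theorem DirMetrSubreg.exists_eventually_infDist_preimage_le {Q : Set Y} {φ : E → Y} {x h : E}
    (hsub : DirMetrSubreg (fun x' => {y : Y | φ x' + y ∈ Q}) x 0 h) :
    ∃ κ > 0, ∃ c > 0, ∀ᶠ t in 𝓝[>] (0 : ℝ), ∀ w ∈ closedBall h c,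
      infDist (x + t • w) (φ ⁻¹' Q) ≤ κ * infDist (φ (x + t • w)) Q := by
  obtain ⟨κ, hκ, V, hV, hest⟩ := hsub
  obtain ⟨c, hc, hcone⟩ := hV.exists_eventually_smul_mem
  refine ⟨κ, hκ, c, hc, ?_⟩
  filter_upwards [hcone] with t ht w hw
  have := hest (x + t • w) (by simpa using ht w hw)
  simp only [mem_ofPred_eq, add_zero, infDist_zero_setOf_add_mem] at this
  exact this

theorem DirCalm.exists_eventually_norm_inv_smul_le [NormedSpace ℝ Y] {φ : E → Y} {x h : E}
    (hcalm : DirCalm φ x h) {t : ℕ → ℝ} {x' : ℕ → E} (ht : Tendsto t atTop (𝓝[>] 0))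
    (hx' : Tendsto (fun k => (t k)⁻¹ • (x' k - x)) atTop (𝓝 h)) :
    ∃ B, ∀ᶠ k in atTop, ‖(t k)⁻¹ • (φ (x' k) - φ x)‖ ≤ B := by
  obtain ⟨κ, hκ, V, hV, hest⟩ := hcalm
  obtain ⟨c, hc, hcone⟩ := hV.exists_eventually_smul_mem
  refine ⟨κ * (‖h‖ + c), ?_⟩
  filter_upwards [ht.eventually hcone, hx'.eventually (closedBall_mem_nhds h hc),
    (tendsto_nhdsWithin_iff.1 ht).2] with k hV' hw (htk : 0 < t k)
  have hxk : x' k - x = t k • ((t k)⁻¹ • (x' k - x)) := (smul_inv_smul₀ htk.ne' _).symm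
  have hnorm : ‖(t k)⁻¹ • (x' k - x)‖ ≤ ‖h‖ + c := by
    have := norm_le_norm_add_norm_sub' ((t k)⁻¹ • (x' k - x)) h
    rw [dist_eq_norm] at hw
    linarith
  have := hest (x' k) (hxk ▸ hV' _ hw)
  rw [hxk, norm_smul, Real.norm_eq_abs, abs_of_pos htk] at this
  rw [norm_smul, Real.norm_eq_abs, abs_of_pos (inv_pos.2 htk)]
  calc (t k)⁻¹ * ‖φ (x' k) - φ x‖ ≤ (t k)⁻¹ * (κ * (t k * ‖(t k)⁻¹ • (x' k - x)‖)) := by gcongr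
    _ = κ * ‖(t k)⁻¹ • (x' k - x)‖ := by field_simp
    _ ≤ κ * (‖h‖ + c) := by gcongr

end Directional

theorem smul_sub_mem_frechetNC_of_isLocalMinOn_smoothNorm {Q : Set E} {a z : E} {σ c : ℝ}
    (hσ : σ ≠ 0) (hc : 0 ≤ c) (hz : z ∈ Q)
    (hmin : IsLocalMinOn (fun y => smoothNorm σ (y - a)) Q z) :
    (c * (smoothNorm σ (a - z))⁻¹) • (a - z) ∈ frechetNC Q z := by
  have hd : HasFDerivAt (fun y => c * smoothNorm σ (y - a))
      (innerSL ℝ (-((c * (smoothNorm σ (a - z))⁻¹) • (a - z)))) z := by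
    refine ((hasFDerivAt_smoothNorm_sub hσ a z).const_mul c).congr_fderiv ?_
    ext v
    simp [smoothNorm_sub_comm σ z a]
    ring
  have hmin' : IsLocalMinOn (fun y => c * smoothNorm σ (y - a)) Q z :=
    hmin.mono fun _ hy => mul_le_mul_of_nonneg_left hy hc
  simpa using neg_mem_frechetNC_of_isLocalMinOn hz hd hmin'

theorem mk2_mem_frechetNC_graphFun_of_isLocalMin_penalty {φ : E → F} {ξ x₀ x : E} {z : F}
    {σ c₁ c₂ : ℝ} (hσ : σ ≠ 0) (hmin : IsLocalMin (fun y => -inner ℝ ξ (y - x₀) +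
      c₁ * smoothNorm σ (y - x₀) + c₂ * smoothNorm σ (φ y - z)) x) :
    mk2 (ξ - (c₁ * (smoothNorm σ (x - x₀))⁻¹) • (x - x₀))
      (-((c₂ * (smoothNorm σ (φ x - z))⁻¹) • (φ x - z))) ∈
        frechetNC (graphFun φ) (mk2 x (φ x)) := by
  have hinner : HasFDerivAt (fun y => inner ℝ ξ (y - x₀)) (innerSL ℝ ξ) x :=
    ((innerSL ℝ ξ).hasFDerivAt.comp x ((hasFDerivAt_id x).sub_const x₀)).congr_fderiv
      (by ext; simp)
  have hf : HasFDerivAt (fun y => -inner ℝ ξ (y - x₀) + c₁ * smoothNorm σ (y - x₀))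
      (innerSL ℝ (-(ξ - (c₁ * (smoothNorm σ (x - x₀))⁻¹) • (x - x₀)))) x := by
    refine (hinner.neg.add ((hasFDerivAt_smoothNorm_sub hσ x₀ x).const_mul c₁)).congr_fderiv ?_
    ext v
    simp
    ring
  have hg : HasFDerivAt (fun w => c₂ * smoothNorm σ (w - z))
      (innerSL ℝ ((c₂ * (smoothNorm σ (φ x - z))⁻¹) • (φ x - z))) (φ x) := by
    refine ((hasFDerivAt_smoothNorm_sub hσ z (φ x)).const_mul c₂).congr_fderiv ?_
    ext v
    simp
    ring
  simpa using mk2_neg_mem_frechetNC_graphFun_of_isLocalMin hf hg hmin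

theorem exists_isLocalMin_penalty [ProperSpace E] {Y : Type*} [NormedAddCommGroup Y]
    [ProperSpace Y] {Q : Set Y} (hQ : IsClosed Q) {φ : E → Y}
    (hφ : Continuous φ) {x₀ ξ : E} (hx₀ : φ x₀ ∈ Q) {ε L r σ : ℝ} (hε : 0 < ε) (hεL : ε ≤ L)
    (hr : 0 < r) (hr1 : r ≤ 1) (hσ : 0 ≤ σ) (hσr : (2 * ε + L) * σ ≤ ε * (r / 2))
    (hball : ∀ y ∈ closedBall x₀ r,
      inner ℝ ξ (y - x₀) ≤ ε * ‖y - x₀‖ + (L - ε) * infDist (φ y) Q ∧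
        dist (φ y) (φ x₀) < 1 / 2) :
    ∃ x' z, ‖x' - x₀‖ + ‖z - φ x'‖ ≤ r / 2 ∧ z ∈ Q ∧
      IsLocalMinOn (fun w => smoothNorm σ (w - φ x')) Q z ∧
      IsLocalMin (fun y => -inner ℝ ξ (y - x₀) + 2 * ε * smoothNorm σ (y - x₀) +
        L * smoothNorm σ (φ y - z)) x' := by
  -- On the compact set `S` the penalty `G` dominates `ε (‖y - x₀‖ + ‖z - φ y‖)`, while
  -- `G (x₀, φ x₀) ≤ ε r / 2`: a minimizer is interior, hence a local minimizer in each variable.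
  let G : E × Y → ℝ := fun p => -inner ℝ ξ (p.1 - x₀) + 2 * ε * smoothNorm σ (p.1 - x₀) +
    L * smoothNorm σ (p.2 - φ p.1)
  let S := closedBall x₀ r ×ˢ (Q ∩ closedBall (φ x₀) 1)
  have hS : IsCompact S :=
    (isCompact_closedBall x₀ r).prod ((isCompact_closedBall _ _).inter_left hQ)
  have hGc : Continuous G := by
    have := continuous_smoothNorm (X := E) σ
    have := continuous_smoothNorm (X := Y) σ
    fun_prop
  have hbase : (x₀, φ x₀) ∈ S :=
    ⟨mem_closedBall_self hr.le, hx₀, mem_closedBall_self zero_le_one⟩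
  obtain ⟨⟨xs, zs⟩, hsS, hmin⟩ := hS.exists_isMinOn ⟨_, hbase⟩ hGc.continuousOn
  have ⟨hxs, hzsQ, hzsB⟩ := hsS
  have hlow : ε * (‖xs - x₀‖ + ‖zs - φ xs‖) ≤ G (xs, zs) := by
    have hdist : infDist (φ xs) Q ≤ ‖zs - φ xs‖ :=
      (infDist_le_dist_of_mem hzsQ).trans_eq (by rw [dist_eq_norm'])
    have h1 := norm_le_smoothNorm σ (xs - x₀)
    have h2 := norm_le_smoothNorm σ (zs - φ xs)
    have := (hball xs hxs).1
    simp only [G]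
    nlinarith
  have hloc : ‖xs - x₀‖ + ‖zs - φ xs‖ ≤ r / 2 := by
    have hG0 : G (x₀, φ x₀) = (2 * ε + L) * σ := by
      simp only [G, sub_self, inner_zero_right, smoothNorm_zero hσ]
      ring
    exact le_of_mul_le_mul_left ((hlow.trans ((hmin hbase).trans_eq hG0)).trans hσr) hε
  have hxs_ball : xs ∈ ball x₀ r := by
    rw [mem_ball, dist_eq_norm]; linarith [norm_nonneg (zs - φ xs)]
  have hzs_ball : zs ∈ ball (φ x₀) 1 := by
    have := (hball xs hxs).2
    rw [mem_ball]
    calc dist zs (φ x₀) ≤ dist zs (φ xs) + dist (φ xs) (φ x₀) := dist_triangle _ _ _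
      _ < 1 := by rw [dist_eq_norm]; linarith [norm_nonneg (xs - x₀)]
  refine ⟨xs, zs, hloc, hzsQ, ?_, ?_⟩
  · filter_upwards [nhdsWithin_le_nhds (isOpen_ball.mem_nhds hzs_ball), self_mem_nhdsWithin]
      with z hz hzQ
    have : G (xs, zs) ≤ G (xs, z) :=
      hmin (show (xs, z) ∈ S from ⟨hxs, hzQ, ball_subset_closedBall hz⟩)
    simp only [G, add_le_add_iff_left] at this
    exact le_of_mul_le_mul_left this (hε.trans_le hεL)
  · filter_upwards [isOpen_ball.mem_nhds hxs_ball] with y hy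
    simpa [G, smoothNorm_sub_comm σ zs] using
      hmin (show (y, zs) ∈ S from ⟨ball_subset_closedBall hy, hzsQ, hzsB⟩)

section Fuzzy

variable [ProperSpace E] [ProperSpace F]

theorem exists_fuzzy_normals_of_inner_le {Q : Set F} (hQ : IsClosed Q) {φ : E → F}
    (hφ : Continuous φ) {x₀ ξ : E} (hx₀ : φ x₀ ∈ Q) {ε L r : ℝ} (hε : 0 < ε) (hεL : ε ≤ L)
    (hr : 0 < r) (hrε : r ≤ ε) (hε1 : ε ≤ 1)
    (hball : ∀ y ∈ closedBall x₀ r,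
      inner ℝ ξ (y - x₀) ≤ ε * ‖y - x₀‖ + (L - ε) * infDist (φ y) Q ∧
        dist (φ y) (φ x₀) < 1 / 2) :
    ∃ x' z ξ' η, ‖x' - x₀‖ ≤ ε ∧ ‖z - φ x'‖ ≤ ε ∧ ‖ξ' - ξ‖ ≤ 2 * ε ∧ ‖η‖ ≤ L ∧
      η ∈ frechetNC Q z ∧ mk2 ξ' (-η) ∈ frechetNC (graphFun φ) (mk2 x' (φ x')) := by
  have hL : 0 < L := hε.trans_le hεL
  set σ := ε * r / (2 * (2 * ε + L)) with hσdef
  have hσ : 0 < σ := by positivity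
  have hσr : (2 * ε + L) * σ ≤ ε * (r / 2) := le_of_eq (by rw [hσdef]; field_simp)
  obtain ⟨xs, zs, hloc, hzsQ, hQmin, hgmin⟩ :=
    exists_isLocalMin_penalty hQ hφ hx₀ hε hεL hr (hrε.trans hε1) hσ.le hσr hball
  refine ⟨xs, zs, _, _, by linarith [norm_nonneg (zs - φ xs)],
    by linarith [norm_nonneg (xs - x₀)], ?_, norm_smul_smoothNorm_inv_le hσ.ne' _ hL.le,
    smul_sub_mem_frechetNC_of_isLocalMinOn_smoothNorm hσ.ne' hL.le hzsQ hQmin,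
    mk2_mem_frechetNC_graphFun_of_isLocalMin_penalty hσ.ne' hgmin⟩
  rw [sub_sub_cancel_left, norm_neg]
  exact norm_smul_smoothNorm_inv_le hσ.ne' _ (by positivity)

theorem exists_fuzzy_normals_of_mem_frechetNC_preimage {Q : Set F} (hQ : IsClosed Q) {φ : E → F}
    (hφ : Continuous φ) {x₀ ξ : E} (hξ : ξ ∈ frechetNC (φ ⁻¹' Q) x₀) {κ : ℝ} (hκ : 0 ≤ κ)
    (hsub : ∀ᶠ y in 𝓝 x₀, infDist y (φ ⁻¹' Q) ≤ κ * infDist (φ y) Q) {ε : ℝ} (hε : 0 < ε)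
    (hε1 : ε ≤ 1) :
    ∃ x' z ξ' η, ‖x' - x₀‖ ≤ ε ∧ ‖z - φ x'‖ ≤ ε ∧ ‖ξ' - ξ‖ ≤ 2 * ε ∧
      ‖η‖ ≤ (‖ξ‖ + 1) * κ + 1 ∧ η ∈ frechetNC Q z ∧
      mk2 ξ' (-η) ∈ frechetNC (graphFun φ) (mk2 x' (φ x')) := by
  have hnear : ∀ᶠ y in 𝓝 x₀, inner ℝ ξ (y - x₀) ≤
      ε * ‖y - x₀‖ + ((‖ξ‖ + 1) * κ + 1 - ε) * infDist (φ y) Q ∧ dist (φ y) (φ x₀) < 1 / 2 := by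
    filter_upwards [eventually_inner_le_of_mem_frechetNC (hQ.preimage hφ) hξ hε, hsub,
      hφ.continuousAt (ball_mem_nhds _ one_half_pos)] with y hinner hreg hφy
    refine ⟨hinner.trans ?_, hφy⟩
    have hd : 0 ≤ infDist (φ y) Q := infDist_nonneg
    have hκ' : (‖ξ‖ + ε) * κ ≤ (‖ξ‖ + 1) * κ + 1 - ε := by nlinarith
    gcongr ε * ‖y - x₀‖ + ?_
    calc (‖ξ‖ + ε) * infDist y (φ ⁻¹' Q) ≤ (‖ξ‖ + ε) * (κ * infDist (φ y) Q) := by gcongr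
      _ ≤ ((‖ξ‖ + 1) * κ + 1 - ε) * infDist (φ y) Q := by nlinarith
  obtain ⟨r, hr, hball⟩ := nhds_basis_closedBall.eventually_iff.1 hnear
  exact exists_fuzzy_normals_of_inner_le hQ hφ hξ.1 hε (by nlinarith [norm_nonneg ξ]) (lt_min hr hε)
    (min_le_right _ _) hε1 fun y hy => hball (closedBall_subset_closedBall (min_le_left _ _) hy)

theorem exists_seq_fuzzy_normals_of_mem_dirNC_preimage {Q : Set F} (hQ : IsClosed Q) {φ : E → F}
    (hφ : Continuous φ) {x h ξ : E} (hsub : DirMetrSubreg (fun x' => {y : F | φ x' + y ∈ Q}) x 0 h)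
    (hξ : ξ ∈ dirNC (φ ⁻¹' Q) x h) :
    ∃ (t : ℕ → ℝ) (x' : ℕ → E) (z : ℕ → F) (ξ' : ℕ → E) (η : ℕ → F),
      Tendsto t atTop (𝓝[>] 0) ∧ Tendsto (fun k => (t k)⁻¹ • (x' k - x)) atTop (𝓝 h) ∧
      Tendsto (fun k => (t k)⁻¹ • (z k - φ (x' k))) atTop (𝓝 0) ∧ Tendsto ξ' atTop (𝓝 ξ) ∧
      (∃ B, ∀ᶠ k in atTop, ‖η k‖ ≤ B) ∧
      ∀ᶠ k in atTop, η k ∈ frechetNC Q (z k) ∧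
        mk2 (ξ' k) (-η k) ∈ frechetNC (graphFun φ) (mk2 (x' k) (φ (x' k))) := by
  obtain ⟨t, hk, ξk, ht, hhk, hξk, hnormal⟩ := exists_tendsto_of_mem_dirNC hξ
  obtain ⟨κ, hκ, c, hc, hreg⟩ := hsub.exists_eventually_infDist_preimage_le
  obtain ⟨ht0, htpos⟩ := tendsto_nhdsWithin_iff.1 ht
  -- accuracy `t k ^ 2 = o(t k)`, so every error vanishes after rescaling by `(t k)⁻¹`
  have happrox : ∀ᶠ k in atTop, ∃ x' z ξ' η, ‖x' - (x + t k • hk k)‖ ≤ t k ^ 2 ∧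
      ‖z - φ x'‖ ≤ t k ^ 2 ∧ ‖ξ' - ξk k‖ ≤ 2 * t k ^ 2 ∧ ‖η‖ ≤ (‖ξk k‖ + 1) * κ + 1 ∧
      η ∈ frechetNC Q z ∧ mk2 ξ' (-η) ∈ frechetNC (graphFun φ) (mk2 x' (φ x')) := by
    filter_upwards [ht.eventually hreg, htpos, hhk.eventually (ball_mem_nhds h hc),
      ht0.eventually (gt_mem_nhds one_pos)] with k hregk (htk : 0 < t k) hhkk ht1
    refine exists_fuzzy_normals_of_mem_frechetNC_preimage hQ hφ (hnormal k) hκ.le ?_ (by positivity)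
      (by nlinarith)
    have hw : Tendsto (fun y => (t k)⁻¹ • (y - x)) (𝓝 (x + t k • hk k)) (𝓝 (hk k)) := by
      have hcont : Continuous fun y : E => (t k)⁻¹ • (y - x) := by fun_prop
      simpa [inv_smul_smul₀ htk.ne'] using hcont.tendsto (x + t k • hk k)
    filter_upwards [hw.eventually (isOpen_ball.mem_nhds hhkk)] with y hy
    simpa [smul_inv_smul₀ htk.ne'] using hregk _ (ball_subset_closedBall hy)
  obtain ⟨N, hN⟩ := eventually_atTop.1 happrox
  choose! x' z ξ' η hx' hz hξ' hη hnQ hngraph using hN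
  have hge : ∀ᶠ k in atTop, N ≤ k := eventually_ge_atTop N
  refine ⟨t, x', z, ξ', η, ht, ?_, ?_, ?_, ⟨(‖ξ‖ + 2) * κ + 1, ?_⟩, ?_⟩
  · refine hhk.of_eventually_dist_le ht0 ?_
    filter_upwards [hge, htpos] with k hkN (htk : 0 < t k)
    have hsplit : (t k)⁻¹ • (x' k - x) - hk k = (t k)⁻¹ • (x' k - (x + t k • hk k)) := by
      rw [sub_add_eq_sub_sub, smul_sub _ (x' k - x), inv_smul_smul₀ htk.ne']
    rw [dist_eq_norm', hsplit]
    exact norm_inv_smul_le_of_le_sq htk (hx' k hkN)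
  · refine tendsto_const_nhds.of_eventually_dist_le ht0 ?_
    filter_upwards [hge, htpos] with k hkN (htk : 0 < t k)
    rw [dist_zero_left]
    exact norm_inv_smul_le_of_le_sq htk (hz k hkN)
  · refine hξk.of_eventually_dist_le (e := fun k => 2 * t k ^ 2)
      (by simpa using (ht0.pow 2).const_mul 2) ?_
    filter_upwards [hge] with k hkN
    rw [dist_eq_norm']
    exact hξ' k hkN
  · filter_upwards [hge, hξk.norm.eventually (gt_mem_nhds (lt_add_one ‖ξ‖))] with k hkN hξkk
    calc ‖η k‖ ≤ (‖ξk k‖ + 1) * κ + 1 := hη k hkN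
      _ ≤ (‖ξ‖ + 2) * κ + 1 := by gcongr ?_ * κ + 1; linarith
  · filter_upwards [hge] with k hkN using ⟨hnQ k hkN, hngraph k hkN⟩

end Fuzzy

theorem mem_iUnion_dirCoderiv_of_tendsto [ProperSpace F] {Q : Set F} {φ : E → F} {x h ξ : E}
    {t : ℕ → ℝ} {x' ξ' : ℕ → E} {z η : ℕ → F} (ht : Tendsto t atTop (𝓝[>] 0))
    (hx' : Tendsto (fun k => (t k)⁻¹ • (x' k - x)) atTop (𝓝 h))
    (hz : Tendsto (fun k => (t k)⁻¹ • (z k - φ (x' k))) atTop (𝓝 0))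
    (hξ' : Tendsto ξ' atTop (𝓝 ξ)) (hη : ∃ B, ∀ᶠ k in atTop, ‖η k‖ ≤ B)
    (hv : ∃ B, ∀ᶠ k in atTop, ‖(t k)⁻¹ • (φ (x' k) - φ x)‖ ≤ B)
    (hmem : ∀ᶠ k in atTop, η k ∈ frechetNC Q (z k) ∧
      mk2 (ξ' k) (-η k) ∈ frechetNC (graphFun φ) (mk2 (x' k) (φ (x' k)))) :
    ξ ∈ ⋃ v ∈ gderiv φ x h ∩ tangentCone Q (φ x), ⋃ η ∈ dirNC Q (φ x) v, dirCoderiv φ x h v η := by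
  obtain ⟨Bη, hBη⟩ := hη
  obtain ⟨Bv, hBv⟩ := hv
  have hbdd : ∀ᶠ k in atTop, ((t k)⁻¹ • (φ (x' k) - φ x), η k) ∈
      closedBall (0 : F) Bv ×ˢ closedBall (0 : F) Bη := by
    filter_upwards [hBv, hBη] with k hvk hηk
    exact ⟨mem_closedBall_zero_iff.2 hvk, mem_closedBall_zero_iff.2 hηk⟩
  obtain ⟨⟨v, ζ⟩, -, K, hK, hlim⟩ := tendsto_subseq_of_frequently_bounded
    (isBounded_closedBall.prod isBounded_closedBall) hbdd.frequently
  have hKt := hK.tendsto_atTop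
  have hvK := (continuous_fst.tendsto _).comp hlim
  have hζK := (continuous_snd.tendsto _).comp hlim
  have hzK : Tendsto (fun i => (t (K i))⁻¹ • (z (K i) - φ x)) atTop (𝓝 v) := by
    simpa [← smul_add] using (hz.comp hKt).add hvK
  have hQ' : ζ ∈ dirNC Q (φ x) v :=
    mem_dirNC_of_tendsto (ht.comp hKt) hzK hζK (hKt.eventually (hmem.mono fun _ h => h.1))
  have hgraph : ξ ∈ dirCoderiv φ x h v ζ := by
    refine mem_dirNC_of_tendsto (ht.comp hKt) ?_ (tendsto_mk2 (hξ'.comp hKt) hζK.neg)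
      (hKt.eventually (hmem.mono fun _ h => h.2))
    simpa only [Function.comp_def, inv_smul_mk2_sub] using tendsto_mk2 (hx'.comp hKt) hvK
  exact mem_iUnion₂.2 ⟨v, ⟨mem_gderiv_of_mem_dirCoderiv hgraph, mem_tangentCone_of_mem_dirNC hQ'⟩,
    mem_iUnion₂.2 ⟨ζ, hQ', hgraph⟩⟩

theorem dirNC_preimage_of_calm_general {n m : ℕ} (Q : Set (Euc m)) (hQ : IsClosed Q)
    (φ : Euc n → Euc m) (hφ : Continuous φ) (x : Euc n) (h : Euc n)
    (hsub : DirMetrSubreg (fun x' => {y : Euc m | φ x' + y ∈ Q}) x 0 h)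
    (hcalm : DirCalm φ x h) :
    dirNC (φ ⁻¹' Q) x h ⊆
      ⋃ v ∈ gderiv φ x h ∩ tangentCone Q (φ x),
        ⋃ η ∈ dirNC Q (φ x) v, dirCoderiv φ x h v η := by
  intro ξ hξ
  obtain ⟨t, x', z, ξ', η, ht, hx', hz, hξ', hη, hmem⟩ :=
    exists_seq_fuzzy_normals_of_mem_dirNC_preimage hQ hφ hsub hξ
  exact mem_iUnion_dirCoderiv_of_tendsto ht hx' hz hξ' hη
    (hcalm.exists_eventually_norm_inv_smul_le ht hx') hmem

/-- **Theorem 3.1 (pre-image sets), sharper estimate under calmness.** -/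
theorem dirNC_preimage_of_calm {n m : ℕ} (Q : Set (Euc m)) (hQ : IsClosed Q)
    (φ : Euc n → Euc m) (hφ : Continuous φ) (x : Euc n) (hx : φ x ∈ Q) (h : Euc n)
    (hsub : DirMetrSubreg (fun x' => {y : Euc m | φ x' + y ∈ Q}) x 0 h)
    (hcalm : DirCalm φ x h) :
    dirNC (φ ⁻¹' Q) x h ⊆
      ⋃ v ∈ gderiv φ x h ∩ tangentCone Q (φ x),
        ⋃ η ∈ dirNC Q (φ x) v, dirCoderiv φ x h v η :=
  dirNC_preimage_of_calm_general Q hQ φ hφ x h hsub hcalm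

end Paper
end
end

section
/- Let C_i ⊂ ℝⁿ, i = 1,…,l, be closed, C = ⋃_{i=1}^l C_i, x̄ ∈ C and h ∈ ℝⁿ. Denote I(x̄, h) := {i : x̄ ∈ C_i and h ∈ T_{C_i}(x̄)}. Then N_C(x̄; h) ⊂ ⋃_{i ∈ I(x̄, h)} N_{C_i}(x̄; h). -/
open Filter Topology Set Pointwise

noncomputable section

namespace Paper

variable {E : Type*} [NormedAddCommGroup E] [InnerProductSpace ℝ E]
variable {F : Type*} [NormedAddCommGroup F] [InnerProductSpace ℝ F]

/-! Infinitely many of the points `x + t_k u_k` lie in a single `C i`. Along that subsequence the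
Fréchet normals to the union are Fréchet normals to `C i`, and the subsequence itself shows
`h ∈ T_{C i}(x)`, which forces `x ∈ C i` since `C i` is closed. -/

theorem exists_strictMono_forall_mem_of_forall_mem_iUnion {α ι : Type*} [Finite ι]
    {C : ι → Set α} {a : ℕ → α} (ha : ∀ k, a k ∈ ⋃ i, C i) :
    ∃ i, ∃ φ : ℕ → ℕ, StrictMono φ ∧ ∀ k, a (φ k) ∈ C i :=
  let ⟨i, hi⟩ :=
    frequently_exists.mp (Frequently.of_forall (f := atTop) fun k => mem_iUnion.mp (ha k))
  ⟨i, extraction_of_frequently_atTop hi⟩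

theorem mem_of_mem_tangentCone_of_isClosed {Ω : Set E} (hΩ : IsClosed Ω) {x u : E}
    (hu : u ∈ tangentCone Ω x) : x ∈ Ω := by
  obtain ⟨v, t, hv, -, ht, hmem⟩ := hu
  have hlim : Tendsto (fun k => x + t k • v k) atTop (𝓝 x) := by
    simpa using tendsto_const_nhds.add (ht.smul hv)
  exact hΩ.mem_of_tendsto hlim (Eventually.of_forall hmem)

theorem frechetNC_subset_of_subset {A B : Set E} (hAB : A ⊆ B) {y : E} (hy : y ∈ A) :
    frechetNC B y ⊆ frechetNC A y :=
  fun _ hξ => ⟨hy, fun ε hε => (hξ.2 ε hε).filter_mono (nhdsWithin_mono _ hAB)⟩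

theorem dirNC_iUnion_subset_general {n l : ℕ} (C : Fin l → Set (Euc n)) (hC : ∀ i, IsClosed (C i))
    (x h : Euc n) :
    dirNC (⋃ i, C i) x h ⊆
      ⋃ i ∈ {i : Fin l | x ∈ C i ∧ h ∈ tangentCone (C i) x}, dirNC (C i) x h := by
  rintro ξ ⟨t, u, ξs, ht, ht0, hu, hξ, hN⟩
  obtain ⟨i, φ, hφ, hmem⟩ := exists_strictMono_forall_mem_of_forall_mem_iUnion fun k => (hN k).1
  have hφ_top := hφ.tendsto_atTop
  have htan : h ∈ tangentCone (C i) x :=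
    ⟨u ∘ φ, t ∘ φ, hu.comp hφ_top, fun _ => ht _, ht0.comp hφ_top, hmem⟩
  refine mem_iUnion₂.mpr ⟨i, ⟨mem_of_mem_tangentCone_of_isClosed (hC i) htan, htan⟩, ?_⟩
  exact ⟨t ∘ φ, u ∘ φ, ξs ∘ φ, fun _ => ht _, ht0.comp hφ_top, hu.comp hφ_top, hξ.comp hφ_top,
    fun k => frechetNC_subset_of_subset (subset_iUnion C i) (hmem k) (hN (φ k))⟩

/-- **Proposition 3.1 (unions).** -/
theorem dirNC_iUnion_subset {n l : ℕ} (C : Fin l → Set (Euc n)) (hC : ∀ i, IsClosed (C i))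
    (x h : Euc n) (hx : x ∈ ⋃ i, C i) :
    dirNC (⋃ i, C i) x h ⊆
      ⋃ i ∈ {i : Fin l | x ∈ C i ∧ h ∈ tangentCone (C i) x}, dirNC (C i) x h :=
  dirNC_iUnion_subset_general C hC x h

end Paper
end
end

section
/- Let f : ℝⁿ → ℝ ∪ {±∞} be lower semicontinuous and finite at x̄, and let h ∈ ℝⁿ. Then ∂_a f(x̄; h) = {x* : (x*, −1) ∈ ⋃_{ν ∈ Df(x̄)(h)} N_{epi f}((x̄, f(x̄)); (h, ν)) ∪ N_{epi f}((x̄, f(x̄)); (h, +∞)) ∪ N_{epi f}((x̄, f(x̄)); (h, −∞))}. -/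
open Filter Topology Set Pointwise

noncomputable section

namespace Paper

variable {E : Type*} [NormedAddCommGroup E] [InnerProductSpace ℝ E]
variable {F : Type*} [NormedAddCommGroup F] [InnerProductSpace ℝ F]

/-! A vector `ξ` is a regular subgradient of `f` at a point `y` where `f` is finite exactly when
`(ξ, -1)` is a Fréchet normal to `epi f` at `(y, f y)`; and a Fréchet normal `(ξ, β)` with `β < 0`
at a point `(y, α)` of the epigraph forces `α = f y`, since otherwise the vertical half-line below
`(y, α)` stays in `epi f`. Hence, with `ν_k` the difference quotients of `f` along
`x + t_k h_k`, the condition `f (x + t_k h_k) → f x` becomes `t_k ν_k → 0`, and `∂ₐ f(x; h)`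
consists of the `ξ` for which `(ξ, -1)` is a limit of Fréchet normals to `epi f` at
`(x, f x) + t_k (h_k, ν_k)` with `t_k ν_k → 0`. Extracting a subsequence along which `ν_k`
converges in `[-∞, ∞]` sorts these limits into the three pieces of the union; for a finite limit
`ν` the base points lie on the graph of `f`, so that `ν ∈ Df(x)(h)`. -/

section Product

variable {α β : Type*}

@[simp] lemma mk2_fst (x : α) (y : β) : (mk2 x y).fst = x := rfl

@[simp] lemma mk2_snd (x : α) (y : β) : (mk2 x y).snd = y := rfl

lemma mk2_sub [AddCommGroup α] [AddCommGroup β] (x z : α) (a c : β) :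
    mk2 x a - mk2 z c = mk2 (x - z) (a - c) := rfl

lemma tendsto_mk2_s9 [TopologicalSpace α] [TopologicalSpace β] {ι : Type*} {l : Filter ι}
    {u : ι → α} {v : ι → β} {x : α} {y : β} (hu : Tendsto u l (𝓝 x)) (hv : Tendsto v l (𝓝 y)) :
    Tendsto (fun k => mk2 (u k) (v k)) l (𝓝 (mk2 x y)) :=
  ((WithLp.prod_continuous_toLp 2 α β).tendsto (x, y)).comp (hu.prodMk_nhds hv)

lemma mk2_mem_epiE {f : α → EReal} {y : α} {a : ℝ} : mk2 y a ∈ epiE f ↔ f y ≤ a := by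
  refine ⟨?_, fun hle => ⟨y, a, rfl, hle⟩⟩
  rintro ⟨z, b, heq, hle⟩
  obtain ⟨rfl, rfl⟩ := Prod.ext_iff.1 (congrArg WithLp.ofLp heq)
  exact hle

lemma norm_mk2_le [SeminormedAddCommGroup α] (x : α) (a : ℝ) : ‖mk2 x a‖ ≤ ‖x‖ + |a| := by
  have hsplit : mk2 x a = mk2 x (0 : ℝ) + mk2 (0 : α) a := by simp [mk2, ← WithLp.toLp_add]
  calc ‖mk2 x a‖ ≤ ‖mk2 x (0 : ℝ)‖ + ‖mk2 (0 : α) a‖ := hsplit ▸ norm_add_le _ _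
    _ = ‖x‖ + |a| := by simp [mk2, WithLp.norm_toLp_fst, WithLp.norm_toLp_snd]

variable [AddCommGroup α] [Module ℝ α]

lemma mk2_add_smul (x u : α) (a t ν : ℝ) :
    mk2 x a + t • mk2 u ν = mk2 (x + t • u) (a + t * ν) := rfl

lemma smul_eq_mk2 (c : ℝ) (p : P2 α ℝ) : c • p = mk2 (c • p.fst) (c * p.snd) := rfl

end Product

lemma inner_mk2 (p : P2 E ℝ) (z : E) (c : ℝ) :
    inner ℝ p (mk2 z c) = inner ℝ p.fst z + p.snd * c := by
  simp [mk2, WithLp.prod_inner_apply, mul_comm]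

section FrechetNormal

variable {Ω : Set E} {x ξ : E}

lemma smul_mem_frechetNC {c : ℝ} (hc : 0 < c) (hξ : ξ ∈ frechetNC Ω x) :
    c • ξ ∈ frechetNC Ω x := by
  refine ⟨hξ.1, fun ε hε => ?_⟩
  filter_upwards [hξ.2 (ε / c) (div_pos hε hc)] with y hy
  rw [real_inner_smul_left]
  calc c * inner ℝ ξ (y - x) ≤ c * (ε / c * ‖y - x‖) := by gcongr
    _ = ε * ‖y - x‖ := by field_simp

lemma inner_nonpos_of_mem_frechetNC {d : E} (hξ : ξ ∈ frechetNC Ω x)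
    (hd : ∀ᶠ s in 𝓝[>] (0 : ℝ), x + s • d ∈ Ω) : inner ℝ ξ d ≤ 0 := by
  have hray : Tendsto (fun s : ℝ => x + s • d) (𝓝[>] 0) (𝓝[Ω] x) := by
    refine tendsto_nhdsWithin_iff.2 ⟨?_, hd⟩
    have : Continuous fun s : ℝ => x + s • d := by fun_prop
    simpa using (this.tendsto 0).mono_left nhdsWithin_le_nhds
  have hle : ∀ ε > (0 : ℝ), inner ℝ ξ d ≤ ε * ‖d‖ := by
    intro ε hε
    obtain ⟨s, hs, hspos⟩ := ((hray.eventually (hξ.2 ε hε)).and self_mem_nhdsWithin).exists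
    simp only [add_sub_cancel_left, real_inner_smul_right, norm_smul,
      Real.norm_of_nonneg (le_of_lt hspos)] at hs
    nlinarith
  have hlim : Tendsto (fun ε : ℝ => ε * ‖d‖) (𝓝[>] 0) (𝓝 0) := by
    simpa using ((continuous_mul_const ‖d‖).tendsto 0).mono_left nhdsWithin_le_nhds
  exact ge_of_tendsto hlim (eventually_nhdsWithin_of_forall hle)

end FrechetNormal

section Epigraph

variable {f : E → EReal} {y ξ : E} {a : ℝ}

lemma eq_of_mem_frechetNC_epiE {q : P2 E ℝ} (hq : q ∈ frechetNC (epiE f) (mk2 y a))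
    (hneg : q.snd < 0) : f y = a := by
  refine (mk2_mem_epiE.1 hq.1).eq_of_not_lt fun hlt => hneg.not_ge ?_
  have hdown : ∀ᶠ s in 𝓝[>] (0 : ℝ), mk2 y a + s • mk2 (0 : E) (-1 : ℝ) ∈ epiE f := by
    have hcoe : Tendsto (fun s : ℝ => ((a - s : ℝ) : EReal)) (𝓝[>] 0) (𝓝 a) := by
      have : Continuous fun s : ℝ => ((a - s : ℝ) : EReal) :=
        continuous_coe_real_ereal.comp (continuous_sub_left a)
      exact (this.tendsto' 0 a (by simp)).mono_left nhdsWithin_le_nhds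
    filter_upwards [hcoe.eventually (lt_mem_nhds hlt)] with s hs
    rw [mk2_add_smul, mk2_mem_epiE]
    simpa [sub_eq_add_neg] using hs.le
  simpa [inner_mk2] using inner_nonpos_of_mem_frechetNC hq hdown

lemma mk2_neg_one_mem_frechetNC_epiE (hy : f y = a) (hξ : ξ ∈ regSubdiff f y) :
    mk2 ξ (-1 : ℝ) ∈ frechetNC (epiE f) (mk2 y a) := by
  refine ⟨mk2_mem_epiE.2 hy.le, fun ε hε => ?_⟩
  have hev : ∀ᶠ p in 𝓝[epiE f] (mk2 y a),
      f y + ((inner ℝ ξ (p.fst - y) - ε * ‖p.fst - y‖ : ℝ) : EReal) ≤ f p.fst :=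
    eventually_nhdsWithin_of_eventually_nhds
      (((WithLp.continuous_fst 2 E ℝ).tendsto (mk2 y a)).eventually (hξ ε hε))
  filter_upwards [hev, self_mem_nhdsWithin] with p hp hmem
  obtain ⟨z, α, rfl, hle⟩ := hmem
  rw [mk2_fst, hy, ← EReal.coe_add] at hp
  have hzα : inner ℝ ξ (z - y) - ε * ‖z - y‖ ≤ α - a := by
    have := hp.trans hle
    norm_cast at this
    linarith
  rw [mk2_sub, inner_mk2, mk2_fst, mk2_snd]
  calc inner ℝ ξ (z - y) + -1 * (α - a) ≤ ε * ‖z - y‖ := by linarith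
    _ ≤ ε * ‖mk2 (z - y) (α - a)‖ := by
      gcongr
      exact WithLp.norm_fst_le (x := mk2 (z - y) (α - a))

lemma mem_regSubdiff_of_mk2_neg_one_mem_frechetNC (hy : f y = a)
    (hξ : mk2 ξ (-1 : ℝ) ∈ frechetNC (epiE f) (mk2 y a)) : ξ ∈ regSubdiff f y := by
  intro ε hε
  set C := 1 + ‖ξ‖ + ε
  set g : E → ℝ := fun z => inner ℝ ξ (z - y) - ε * ‖z - y‖
  have hg0 : g y = 0 := by simp [g]
  have hgle : ∀ z, |g z| ≤ (‖ξ‖ + ε) * ‖z - y‖ := fun z => by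
    have := abs_real_inner_le_norm ξ (z - y)
    calc |g z| ≤ |inner ℝ ξ (z - y)| + |ε * ‖z - y‖| := abs_sub _ _
      _ ≤ (‖ξ‖ + ε) * ‖z - y‖ := by
        rw [abs_of_nonneg (by positivity : 0 ≤ ε * ‖z - y‖)]; linarith
  have hlift : Tendsto (fun z => mk2 z (a + g z)) (𝓝 y) (𝓝 (mk2 y a)) := by
    have hg : Continuous g := by fun_prop
    simpa [hg0] using tendsto_mk2_s9 tendsto_id (tendsto_const_nhds.add (hg.tendsto y))
  filter_upwards [hlift.eventually
    (eventually_nhdsWithin_iff.1 (hξ.2 (ε / (2 * C)) (by positivity)))] with z hz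
  rw [hy, ← EReal.coe_add]
  change ((a + g z : ℝ) : EReal) ≤ f z
  refine le_of_not_gt fun hlt => ?_
  -- `(z, a + g z)` lies in the epigraph, which the normal `(ξ, -1)` only allows for `z = y`
  have hnormal := hz (mk2_mem_epiE.2 hlt.le)
  rw [mk2_sub, inner_mk2, add_sub_cancel_left, mk2_fst, mk2_snd] at hnormal
  have hzy : ε * ‖z - y‖ ≤ ε / 2 * ‖z - y‖ :=
    calc ε * ‖z - y‖ = inner ℝ ξ (z - y) + -1 * g z := by simp only [g]; ring
      _ ≤ ε / (2 * C) * ‖mk2 (z - y) (g z)‖ := hnormal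
      _ ≤ ε / (2 * C) * (C * ‖z - y‖) := by
        gcongr
        linarith [norm_mk2_le (z - y) (g z), hgle z]
      _ = ε / 2 * ‖z - y‖ := by field_simp [(by positivity : 0 < C).ne']
  have hzy' : z = y := by
    rw [← sub_eq_zero, ← norm_le_zero_iff]
    nlinarith [norm_nonneg (z - y)]
  rw [hzy', hg0, add_zero, ← hy] at hlt
  exact lt_irrefl _ hlt

end Epigraph

section DirectionalNormals

variable {f : E → EReal} {x h : E} {L : Filter ℝ} {q : P2 E ℝ}
  {t νs : ℕ → ℝ} {hk : ℕ → E} {qk : ℕ → P2 E ℝ}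

structure IsNepiSeq (f : E → EReal) (x h : E) (L : Filter ℝ) (q : P2 E ℝ)
    (t νs : ℕ → ℝ) (hk : ℕ → E) (qk : ℕ → P2 E ℝ) : Prop where
  pos : ∀ k, 0 < t k
  tendsto_t : Tendsto t atTop (𝓝 0)
  tendsto_h : Tendsto hk atTop (𝓝 h)
  tendsto_ν : Tendsto νs atTop L
  tendsto_mul : Tendsto (fun k => t k * νs k) atTop (𝓝 0)
  tendsto_q : Tendsto qk atTop (𝓝 q)
  mem : ∀ k, qk k ∈ frechetNC (epiE f) (mk2 x (f x).toReal + t k • mk2 (hk k) (νs k))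

lemma mem_nepiInfty_iff :
    q ∈ NepiInfty f x h L ↔ ∃ t νs hk qk, IsNepiSeq f x h L q t νs hk qk :=
  ⟨fun ⟨t, νs, hk, qk, h₁, h₂, h₃, h₄, h₅, h₆, h₇⟩ =>
      ⟨t, νs, hk, qk, h₁, h₂, h₃, h₄, h₅, h₆, h₇⟩,
    fun ⟨t, νs, hk, qk, h₁, h₂, h₃, h₄, h₅, h₆, h₇⟩ =>
      ⟨t, νs, hk, qk, h₁, h₂, h₃, h₄, h₅, h₆, h₇⟩⟩

namespace IsNepiSeq

lemma comp (hs : IsNepiSeq f x h L q t νs hk qk) {φ : ℕ → ℕ} (hφ : StrictMono φ) :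
    IsNepiSeq f x h L q (t ∘ φ) (νs ∘ φ) (hk ∘ φ) (qk ∘ φ) :=
  have hφ' := hφ.tendsto_atTop
  ⟨fun _ => hs.pos _, hs.tendsto_t.comp hφ', hs.tendsto_h.comp hφ', hs.tendsto_ν.comp hφ',
    hs.tendsto_mul.comp hφ', hs.tendsto_q.comp hφ', fun _ => hs.mem _⟩

lemma of_tendsto (hs : IsNepiSeq f x h L q t νs hk qk) {L' : Filter ℝ}
    (hν : Tendsto νs atTop L') : IsNepiSeq f x h L' q t νs hk qk :=
  { hs with tendsto_ν := hν }

lemma eq_of_snd_neg (hs : IsNepiSeq f x h L q t νs hk qk) {k : ℕ} (hneg : (qk k).snd < 0) :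
    f (x + t k • hk k) = ((f x).toReal + t k * νs k : ℝ) :=
  eq_of_mem_frechetNC_epiE (hs.mem k) hneg

lemma mem_dirNC (hs : IsNepiSeq f x h L q t νs hk qk) {r : ℝ} (hν : Tendsto νs atTop (𝓝 r)) :
    q ∈ dirNC (epiE f) (mk2 x (f x).toReal) (mk2 h r) :=
  ⟨t, fun k => mk2 (hk k) (νs k), qk, hs.pos, hs.tendsto_t, tendsto_mk2_s9 hs.tendsto_h hν,
    hs.tendsto_q, hs.mem⟩

lemma mem_gderivE (hs : IsNepiSeq f x h L q t νs hk qk) (hneg : ∀ k, (qk k).snd < 0) {r : ℝ}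
    (hν : Tendsto νs atTop (𝓝 r)) : r ∈ gderivE f x h :=
  ⟨fun k => mk2 (hk k) (νs k), t, tendsto_mk2_s9 hs.tendsto_h hν, hs.pos, hs.tendsto_t,
    fun k => ⟨_, _, rfl, hs.eq_of_snd_neg (hneg k)⟩⟩

end IsNepiSeq

lemma exists_isNepiSeq_snd_neg (hq : q ∈ NepiInfty f x h L) (hneg : q.snd < 0) :
    ∃ t νs hk qk, IsNepiSeq f x h L q t νs hk qk ∧ ∀ k, (qk k).snd < 0 := by
  obtain ⟨t, νs, hk, qk, hs⟩ := mem_nepiInfty_iff.1 hq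
  have hsnd := ((WithLp.continuous_snd 2 E ℝ).tendsto q).comp hs.tendsto_q
  obtain ⟨φ, hφ, hφneg⟩ := extraction_of_eventually_atTop (hsnd.eventually_lt_const hneg)
  exact ⟨_, _, _, _, hs.comp hφ, hφneg⟩

-- With `L = ⊤` the `ν_k` are unconstrained.
lemma nepiInfty_subset_top : NepiInfty f x h L ⊆ NepiInfty f x h ⊤ :=
  fun _ ⟨t, νs, hk, qk, h₁, h₂, h₃, _, h₅, h₆, h₇⟩ =>
    ⟨t, νs, hk, qk, h₁, h₂, h₃, tendsto_top, h₅, h₆, h₇⟩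

lemma dirNC_subset_nepiInfty_top {ν : ℝ} :
    dirNC (epiE f) (mk2 x (f x).toReal) (mk2 h ν) ⊆ NepiInfty f x h ⊤ := by
  rintro q ⟨t, u, qk, htpos, ht0, hu, hqk, hmem⟩
  have hfst := ((WithLp.continuous_fst 2 E ℝ).tendsto _).comp hu
  have hsnd := ((WithLp.continuous_snd 2 E ℝ).tendsto _).comp hu
  exact ⟨t, fun k => (u k).snd, fun k => (u k).fst, qk, htpos, ht0, hfst, tendsto_top,
    by simpa using ht0.mul hsnd, hqk, hmem⟩

lemma mem_nepiInfty_top_iff (hneg : q.snd < 0) :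
    q ∈ NepiInfty f x h ⊤ ↔
      q ∈ (⋃ ν ∈ gderivE f x h, dirNC (epiE f) (mk2 x (f x).toReal) (mk2 h ν)) ∪
        NepiInfty f x h atTop ∪ NepiInfty f x h atBot := by
  refine ⟨fun hq => ?_, ?_⟩
  · obtain ⟨t, νs, hk, qk, hs, hsnd⟩ := exists_isNepiSeq_snd_neg hq hneg
    obtain ⟨L, φ, hφ, hL⟩ := CompactSpace.tendsto_subseq fun k => (νs k : EReal)
    induction L using EReal.rec with
    | bot => exact Or.inr (mem_nepiInfty_iff.2
        ⟨_, _, _, _, (hs.comp hφ).of_tendsto (EReal.tendsto_coe_nhds_bot_iff.1 hL)⟩)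
    | top => exact Or.inl (Or.inr (mem_nepiInfty_iff.2
        ⟨_, _, _, _, (hs.comp hφ).of_tendsto (EReal.tendsto_coe_nhds_top_iff.1 hL)⟩))
    | coe r =>
      have hν := EReal.tendsto_coe.1 hL
      exact Or.inl (Or.inl (mem_biUnion ((hs.comp hφ).mem_gderivE (fun k => hsnd _) hν)
        ((hs.comp hφ).mem_dirNC hν)))
  · rintro ((hq | hq) | hq)
    · obtain ⟨ν, -, hq⟩ := mem_iUnion₂.1 hq
      exact dirNC_subset_nepiInfty_top hq
    · exact nepiInfty_subset_top hq
    · exact nepiInfty_subset_top hq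

end DirectionalNormals

section AnalyticSubdifferential

variable {f : E → EReal} {x h ξ : E}

lemma mem_aDirSubdiff_of_mem_nepiInfty (hfin : f x ≠ ⊤ ∧ f x ≠ ⊥) {L : Filter ℝ}
    (hq : mk2 ξ (-1 : ℝ) ∈ NepiInfty f x h L) : ξ ∈ aDirSubdiff f x h := by
  obtain ⟨t, νs, hk, qk, hs, hneg⟩ := exists_isNepiSeq_snd_neg hq (by simp)
  have hsubgrad : ∀ k, (-(qk k).snd)⁻¹ • (qk k).fst ∈ regSubdiff f (x + t k • hk k) := by
    intro k
    refine mem_regSubdiff_of_mk2_neg_one_mem_frechetNC (hs.eq_of_snd_neg (hneg k)) ?_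
    have hscale : (-(qk k).snd)⁻¹ * (qk k).snd = -1 := by field_simp [(hneg k).ne]
    have := smul_mem_frechetNC (inv_pos.2 (neg_pos.2 (hneg k))) (hs.mem k)
    rwa [smul_eq_mk2 _ (qk k), hscale] at this
  refine ⟨t, hk, _, hs.pos, hs.tendsto_t, hs.tendsto_h, ?_, ?_, hsubgrad⟩
  · have hfst := ((WithLp.continuous_fst 2 E ℝ).tendsto _).comp hs.tendsto_q
    have hsnd := ((WithLp.continuous_snd 2 E ℝ).tendsto _).comp hs.tendsto_q
    simpa using (hsnd.neg.inv₀ (by simp)).smul hfst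
  · have hval : Tendsto (fun k => (((f x).toReal + t k * νs k : ℝ) : EReal)) atTop
        (𝓝 ((f x).toReal : EReal)) :=
      (continuous_coe_real_ereal.tendsto _).comp (by simpa using hs.tendsto_mul.const_add _)
    rw [EReal.coe_toReal hfin.1 hfin.2] at hval
    exact hval.congr fun k => (hs.eq_of_snd_neg (hneg k)).symm

lemma mem_nepiInfty_top_of_mem_aDirSubdiff (hfin : f x ≠ ⊤ ∧ f x ≠ ⊥)
    (hξ : ξ ∈ aDirSubdiff f x h) : mk2 ξ (-1 : ℝ) ∈ NepiInfty f x h ⊤ := by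
  obtain ⟨t, hk, ξk, htpos, ht0, hhk, hξk, hfc, hsub⟩ := hξ
  obtain ⟨φ, hφ, hfinφ⟩ :=
    extraction_of_eventually_atTop ((hfc.eventually_ne hfin.1).and (hfc.eventually_ne hfin.2))
  have hφ' := hφ.tendsto_atTop
  set y : ℕ → E := fun k => x + t (φ k) • hk (φ k)
  set νs : ℕ → ℝ := fun k => ((f (y k)).toReal - (f x).toReal) / t (φ k)
  have hmul : ∀ k, t (φ k) * νs k = (f (y k)).toReal - (f x).toReal := fun k => by
    simp only [νs]; field_simp [(htpos (φ k)).ne']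
  refine ⟨t ∘ φ, νs, hk ∘ φ, fun k => mk2 (ξk (φ k)) (-1 : ℝ), fun k => htpos _, ht0.comp hφ',
    hhk.comp hφ', tendsto_top, ?_, tendsto_mk2_s9 (hξk.comp hφ') tendsto_const_nhds, fun k => ?_⟩
  · simpa [hmul, y] using
      ((EReal.tendsto_toReal hfin.1 hfin.2).comp (hfc.comp hφ')).sub_const (f x).toReal
  · rw [mk2_add_smul, Function.comp_apply, Function.comp_apply, hmul, add_sub_cancel]
    exact mk2_neg_one_mem_frechetNC_epiE (EReal.coe_toReal (hfinφ k).1 (hfinφ k).2).symm (hsub _)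

end AnalyticSubdifferential

theorem aDirSubdiff_eq_union_normal_cones_general {n : ℕ} (f : Euc n → EReal)
    (x : Euc n) (hfin : f x ≠ ⊤ ∧ f x ≠ ⊥) (h : Euc n) :
    aDirSubdiff f x h = {ξ : Euc n | mk2 ξ (-1 : ℝ) ∈
      (⋃ ν ∈ gderivE f x h, dirNC (epiE f) (mk2 x (f x).toReal) (mk2 h ν)) ∪
      NepiInfty f x h atTop ∪ NepiInfty f x h atBot} := by
  ext ξ
  rw [mem_ofPred_eq, ← mem_nepiInfty_top_iff (by simp)]
  exact ⟨mem_nepiInfty_top_of_mem_aDirSubdiff hfin, mem_aDirSubdiff_of_mem_nepiInfty hfin⟩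

/-- **Proposition 4.1.** Characterization of the analytic directional limiting subdifferential
via normal cones to the epigraph. -/
theorem aDirSubdiff_eq_union_normal_cones {n : ℕ} (f : Euc n → EReal)
    (hlsc : LowerSemicontinuous f) (x : Euc n) (hfin : f x ≠ ⊤ ∧ f x ≠ ⊥) (h : Euc n) :
    aDirSubdiff f x h = {ξ : Euc n | mk2 ξ (-1 : ℝ) ∈
      (⋃ ν ∈ gderivE f x h, dirNC (epiE f) (mk2 x (f x).toReal) (mk2 h ν)) ∪
      NepiInfty f x h atTop ∪ NepiInfty f x h atBot} :=
  aDirSubdiff_eq_union_normal_cones_general f x hfin h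

end Paper
end
end

section
/- Let f = min{f₁, …, f_l} for lower semicontinuous functions f_i : ℝⁿ → ℝ ∪ {±∞}, let x̄ ∈ dom f and let (h, ν) ∈ ℝⁿ × ℝ. Define I₀(x̄, (h, ν)) := {i : f(x̄) = f_i(x̄), ν ∈ Df_i(x̄)(h) and ∂f_i(x̄; (h, ν)) ≠ ∅}. Then ∂f(x̄; (h, ν)) ⊂ ⋃_{i ∈ I₀(x̄, (h, ν))} ∂f_i(x̄; (h, ν)). -/
open Filter Topology Set Pointwise

noncomputable section

namespace Paper

variable {E : Type*} [NormedAddCommGroup E] [InnerProductSpace ℝ E]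
variable {F : Type*} [NormedAddCommGroup F] [InnerProductSpace ℝ F]

/-!
Let `tₖ`, `(hₖ, νₖ)`, `wₖ → (ξ, -1)` witness `ξ ∈ ∂f(x; (h, ν))`. Eventually `wₖ` has negative
last component, which forces the base point `qₖ` onto `gph f`: at a point strictly above the graph
the downward vertical direction stays in `epi f`, and a Fréchet normal pairs nonpositively with it.
A finite minimum is attained, so `qₖ ∈ ⋃ᵢ gph fᵢ` and some `i` occurs infinitely often. Along that
subsequence `qₖ ∈ gph fᵢ ⊆ epi fᵢ ⊆ epi f`, and Fréchet normals to `epi f` are Fréchet normals to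
the smaller set `epi fᵢ`; this gives `ξ ∈ ∂fᵢ(x; (h, ν))` and `ν ∈ Dfᵢ(x)(h)`. Finally `epi fᵢ` is
closed, so the limit `(x, f(x))` of the `qₖ` lies in it: `fᵢ(x) ≤ f(x)`.
-/

section NormalCones

variable {E : Type*} [NormedAddCommGroup E] [InnerProductSpace ℝ E]

lemma frechetNC_anti {Ω Ω' : Set E} (hsub : Ω' ⊆ Ω) {x : E} (hx : x ∈ Ω') :
    frechetNC Ω x ⊆ frechetNC Ω' x := by
  rintro ξ ⟨-, hξ⟩
  exact ⟨hx, fun ε hε => (hξ ε hε).filter_mono (nhdsWithin_mono x hsub)⟩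

lemma inner_nonpos_of_mem_frechetNC_s17 {Ω : Set E} {z w v : E} (hw : w ∈ frechetNC Ω z)
    (hray : ∀ᶠ s in 𝓝[>] (0 : ℝ), z + s • v ∈ Ω) : inner ℝ w v ≤ 0 := by
  have hlim : Tendsto (fun s : ℝ => z + s • v) (𝓝[>] 0) (𝓝[Ω] z) := by
    refine tendsto_nhdsWithin_iff.mpr ⟨?_, hray⟩
    have : Continuous (fun s : ℝ => z + s • v) := by fun_prop
    simpa using this.continuousWithinAt.tendsto (x := 0) (s := Ioi 0)
  have hε : ∀ ε > (0 : ℝ), inner ℝ w v ≤ ε * ‖v‖ := by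
    intro ε hε
    obtain ⟨s, hs, hs0 : 0 < s⟩ :=
      ((hlim.eventually (hw.2 ε hε)).and self_mem_nhdsWithin).exists
    rw [add_sub_cancel_left, inner_smul_right, norm_smul, Real.norm_of_nonneg hs0.le,
      mul_left_comm] at hs
    exact le_of_mul_le_mul_left hs hs0
  have hεlim : Tendsto (fun ε : ℝ => ε * ‖v‖) (𝓝[>] 0) (𝓝 0) := by
    simpa using (tendsto_id.mul_const ‖v‖).mono_left (nhdsWithin_le_nhds (a := (0 : ℝ)))
  exact ge_of_tendsto hεlim (eventually_nhdsWithin_of_forall hε)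

lemma mem_dirNC_of_frequently_mem {Ω Ω' : Set E} (hsub : Ω' ⊆ Ω) {z v ξ : E} {t : ℕ → ℝ}
    {u w : ℕ → E} (ht0 : ∀ k, 0 < t k) (ht : Tendsto t atTop (𝓝 0))
    (hu : Tendsto u atTop (𝓝 v)) (hw : Tendsto w atTop (𝓝 ξ))
    (hN : ∀ k, w k ∈ frechetNC Ω (z + t k • u k))
    (hfreq : ∃ᶠ k in atTop, z + t k • u k ∈ Ω') : ξ ∈ dirNC Ω' z v := by
  obtain ⟨K, hK, hKΩ'⟩ := extraction_of_frequently_atTop hfreq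
  have hK := hK.tendsto_atTop
  exact ⟨t ∘ K, u ∘ K, w ∘ K, fun k => ht0 (K k), ht.comp hK, hu.comp hK, hw.comp hK,
    fun k => frechetNC_anti hsub (hKΩ' k) (hN (K k))⟩

lemma mem_tangentCone_of_frequently_mem {Ω : Set E} {z v : E} {t : ℕ → ℝ} {u : ℕ → E}
    (ht0 : ∀ k, 0 < t k) (ht : Tendsto t atTop (𝓝 0)) (hu : Tendsto u atTop (𝓝 v))
    (hfreq : ∃ᶠ k in atTop, z + t k • u k ∈ Ω) : v ∈ tangentCone Ω z := by
  obtain ⟨K, hK, hKΩ⟩ := extraction_of_frequently_atTop hfreq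
  have hK := hK.tendsto_atTop
  exact ⟨u ∘ K, t ∘ K, hu.comp hK, fun k => ht0 (K k), ht.comp hK, hKΩ⟩

end NormalCones

section Epigraphs

variable {E : Type*}

lemma mem_epiE_iff {g : E → EReal} {q : P2 E ℝ} : q ∈ epiE g ↔ g q.fst ≤ q.snd :=
  ⟨fun ⟨_, _, hq, hle⟩ => hq ▸ hle, fun hle => ⟨q.fst, q.snd, rfl, hle⟩⟩

lemma graphE_subset_epiE (g : E → EReal) : graphE g ⊆ epiE g := by
  rintro _ ⟨x, α, rfl, hα⟩
  exact ⟨x, α, rfl, hα.le⟩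

lemma epiE_anti {f g : E → EReal} (hfg : ∀ y, f y ≤ g y) : epiE g ⊆ epiE f := by
  rintro _ ⟨x, α, rfl, hα⟩
  exact ⟨x, α, rfl, (hfg x).trans hα⟩

lemma graphE_iInf_subset {ι : Type*} [Finite ι] (fi : ι → E → EReal) :
    graphE (fun y => ⨅ i, fi i y) ⊆ ⋃ i, graphE (fi i) := by
  rintro _ ⟨x, α, rfl, hα⟩
  cases isEmpty_or_nonempty ι
  · simp only [iInf_of_empty] at hα
    exact absurd hα.symm (EReal.coe_ne_top α)
  · obtain ⟨i, hi⟩ := exists_eq_ciInf_of_finite (f := fun i => fi i x)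
    exact mem_iUnion.mpr ⟨i, x, α, rfl, hi.trans hα⟩

variable [NormedAddCommGroup E]

lemma isClosed_epiE {g : E → EReal} (hg : LowerSemicontinuous g) : IsClosed (epiE g) := by
  have hcont : Continuous fun q : P2 E ℝ => (q.fst, (q.snd : EReal)) :=
    (WithLp.continuous_fst ..).prodMk
      (continuous_coe_real_ereal.comp (WithLp.continuous_snd ..))
  convert hg.isClosed_epigraph.preimage hcont
  ext q
  exact mem_epiE_iff

variable [InnerProductSpace ℝ E]

lemma mk2_add_smul_mk2 (a a' : E) (b b' c : ℝ) :
    mk2 a b + c • mk2 a' b' = mk2 (a + c • a') (b + c * b') := rfl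

lemma mem_graphE_of_mem_frechetNC_epiE {g : E → EReal} {q w : P2 E ℝ}
    (hw : w ∈ frechetNC (epiE g) q) (hneg : w.snd < 0) : q ∈ graphE g := by
  obtain ⟨p, α, rfl, hle⟩ := hw.1
  refine ⟨p, α, rfl, hle.eq_of_not_lt fun hlt => ?_⟩
  have hdown : ∀ᶠ s in 𝓝 (0 : ℝ), g p < ((α + s * -1 : ℝ) : EReal) := by
    have : Continuous fun s : ℝ => ((α + s * -1 : ℝ) : EReal) :=
      continuous_coe_real_ereal.comp (by fun_prop)
    exact this.continuousAt.eventually (lt_mem_nhds (by simpa using hlt))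
  have hinner := inner_nonpos_of_mem_frechetNC_s17 (v := mk2 0 (-1)) hw
    ((eventually_nhdsWithin_of_eventually_nhds hdown).mono fun s hs =>
      ⟨_, _, mk2_add_smul_mk2 .., by simpa using hs.le⟩)
  have : inner ℝ w (mk2 (0 : E) (-1)) = -w.snd := by
    rw [WithLp.prod_inner_apply]
    simp [mk2]
  linarith

end Epigraphs

/-- **Proposition 4.6 (pointwise minimum).** -/
theorem dirSubdiff_min {n l : ℕ} (fi : Fin l → Euc n → EReal)
    (hlsc : ∀ i, LowerSemicontinuous (fi i)) (x h : Euc n) (ν : ℝ)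
    (f : Euc n → EReal) (hf : f = fun y => ⨅ i, fi i y) (hdom : f x ≠ ⊤ ∧ f x ≠ ⊥) :
    dirSubdiff f x h ν ⊆
      ⋃ i ∈ {i : Fin l | (f x = fi i x ∧ ν ∈ gderivE (fi i) x h) ∧
        (dirSubdiff (fi i) x h ν).Nonempty}, dirSubdiff (fi i) x h ν := by
  rintro ξ ⟨t, u, w, ht0, ht, hu, hw, hN⟩
  generalize hz : mk2 x (f x).toReal = z at hN
  have hbase : Tendsto (fun k => z + t k • u k) atTop (𝓝 z) := by
    simpa using tendsto_const_nhds.add (ht.smul hu)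
  have hgraph : ∀ᶠ k in atTop, z + t k • u k ∈ ⋃ i, graphE (fi i) := by
    have hsnd := ((WithLp.continuous_snd ..).tendsto _).comp hw
    filter_upwards [hsnd.eventually (gt_mem_nhds (show (-1 : ℝ) < 0 by norm_num))] with k hk
    exact graphE_iInf_subset fi (hf ▸ mem_graphE_of_mem_frechetNC_epiE (hN k) hk)
  obtain ⟨i, hi⟩ : ∃ i, ∃ᶠ k in atTop, z + t k • u k ∈ graphE (fi i) := by
    simpa only [mem_iUnion, frequently_exists] using hgraph.frequently
  have hle : ∀ y, f y ≤ fi i y := fun y => hf ▸ iInf_le (fun i => fi i y) i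
  have hxi : f x = fi i x := by
    refine le_antisymm (hle x) ?_
    have hzepi : z ∈ epiE (fi i) :=
      (isClosed_epiE (hlsc i)).mem_of_frequently_of_tendsto
        (hi.mono fun k hk => graphE_subset_epiE _ hk) hbase
    have hxepi : fi i x ≤ ((f x).toReal : EReal) := mem_epiE_iff.mp (hz ▸ hzepi)
    rwa [EReal.coe_toReal hdom.1 hdom.2] at hxepi
  rw [hxi] at hz
  have hξi : ξ ∈ dirSubdiff (fi i) x h ν := by
    rw [dirSubdiff, mem_ofPred_eq, hz]
    exact mem_dirNC_of_frequently_mem (epiE_anti hle) ht0 ht hu hw hN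
      (hi.mono fun k hk => graphE_subset_epiE _ hk)
  have hνi : ν ∈ gderivE (fi i) x h := by
    rw [gderivE, mem_ofPred_eq, hz]
    exact mem_tangentCone_of_frequently_mem ht0 ht hu hi
  exact mem_biUnion ⟨⟨hxi, hνi⟩, ξ, hξi⟩ hξi

end Paper
end
end
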